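/- arXiv:2605.03406 — 2 statements merged into one kernel-verified Lean document; each statement's English description precedes it below -/
import Mathlib

section
/- There exist nonnegative constants c₁, c₂, c₃, depending only on K, the stage sizes, the box C and the essential bounds on the densities of G₀ and G_a, and not on M or η, such that for every η ∈ (0,1) and M ≥ 1, setting ε_G(η,M) = √((c₁ log(1/η) + c₂ log M + c₃)/M), with probability at least 1−η: Θ_G(α − ε_G(η,M), β − ε_G(η,M)) ⊆ Θ^G_M(α,β) ⊆ Θ_G(α + ε_G(η,M), β + ε_G(η,M)). -/
open MeasureTheory ProbabilityTheory Finset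
open scoped ENNReal

noncomputable section

open Classical in
/-- Real-valued indicator of a proposition. -/
def ind (p : Prop) : ℝ := if p then 1 else 0

/-- Membership in the box `C = [θlo, θhi]^K`. -/
def inBox {K : ℕ} (θlo θhi : ℝ) (θ : Fin K → ℝ) : Prop := ∀ k, θ k ∈ Set.Icc θlo θhi

/-- `G₀({q : q_k ≤ θ_k ∀ k})`, the type-1 constraint function. -/
def gNullG {K : ℕ} (G0 : Measure (Fin K → ℝ)) (θ : Fin K → ℝ) : ℝ :=
  (G0 {q | ∀ k, q k ≤ θ k}).toReal

/-- `G_a({q : q_k < θ_k ∀ k})`, the type-2 constraint function. -/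
def gAltG {K : ℕ} (Ga : Measure (Fin K → ℝ)) (θ : Fin K → ℝ) : ℝ :=
  (Ga {q | ∀ k, q k < θ k}).toReal

/-- Expected sample size objective
`f_G(θ) = n_1 + ∑_{k=2}^K n_k G_a({q : q_i < θ_i ∀ i ∈ [k−1]})`. -/
def fObjG {K : ℕ} (hK : 0 < K) (Ga : Measure (Fin K → ℝ)) (n : Fin K → ℕ)
    (θ : Fin K → ℝ) : ℝ :=
  (n ⟨0, hK⟩ : ℝ) +
    ∑ k ∈ Finset.univ.filter (fun k : Fin K => k ≠ ⟨0, hK⟩),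
      (n k : ℝ) * (Ga {q | ∀ i < k, q i < θ i}).toReal

/-- Feasible set `Θ_G(α, β)` of the true problem. -/
def FeasG {K : ℕ} (G0 Ga : Measure (Fin K → ℝ)) (θlo θhi α β : ℝ) :
    Set (Fin K → ℝ) :=
  {θ | inBox θlo θhi θ ∧ 1 - α ≤ gNullG G0 θ ∧ gAltG Ga θ ≤ β}

/-- Optimal value `v*_G(α, β)`. -/
def vStarG {K : ℕ} (hK : 0 < K) (G0 Ga : Measure (Fin K → ℝ)) (n : Fin K → ℕ)
    (θlo θhi α β : ℝ) : ℝ :=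
  sInf (fObjG hK Ga n '' FeasG G0 Ga θlo θhi α β)

/-- The set of optimal solutions of the true problem. -/
def OptSetG {K : ℕ} (hK : 0 < K) (G0 Ga : Measure (Fin K → ℝ)) (n : Fin K → ℕ)
    (θlo θhi α β : ℝ) : Set (Fin K → ℝ) :=
  {θ | θ ∈ FeasG G0 Ga θlo θhi α β ∧
    ∀ θ' ∈ FeasG G0 Ga θlo θhi α β, fObjG hK Ga n θ ≤ fObjG hK Ga n θ'}

/-- Empirical `ĝ₀` built from `M` sampled null paths. -/
def empNull {K M : ℕ} (Q : Fin M → Fin K → ℝ) (θ : Fin K → ℝ) : ℝ :=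
  (1 / M : ℝ) * ∑ m : Fin M, ind (∀ k, Q m k ≤ θ k)

/-- Empirical `ĝ_a` built from `M` sampled alternative paths. -/
def empAlt {K M : ℕ} (Qa : Fin M → Fin K → ℝ) (θ : Fin K → ℝ) : ℝ :=
  (1 / M : ℝ) * ∑ m : Fin M, ind (∀ k, Qa m k < θ k)

/-- Empirical (SAA) objective `f̂_M`. -/
def empObj {K M : ℕ} (hK : 0 < K) (n : Fin K → ℕ) (Qa : Fin M → Fin K → ℝ)
    (θ : Fin K → ℝ) : ℝ :=
  (n ⟨0, hK⟩ : ℝ) + (1 / M : ℝ) *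
    ∑ m : Fin M, ∑ k ∈ Finset.univ.filter (fun k : Fin K => k ≠ ⟨0, hK⟩),
      (n k : ℝ) * ind (∀ i < k, Qa m i < θ i)

/-- SAA feasible set `Θ^G_M(α, β)`. -/
def FeasMG {K M : ℕ} (Q Qa : Fin M → Fin K → ℝ) (θlo θhi α β : ℝ) :
    Set (Fin K → ℝ) :=
  {θ | inBox θlo θhi θ ∧ 1 - α ≤ empNull Q θ ∧ empAlt Qa θ ≤ β}

/-- `θ` is an optimal solution of the SAA problem. -/
def SAAOptG {K M : ℕ} (hK : 0 < K) (n : Fin K → ℕ) (Q Qa : Fin M → Fin K → ℝ)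
    (θlo θhi α β : ℝ) (θ : Fin K → ℝ) : Prop :=
  θ ∈ FeasMG Q Qa θlo θhi α β ∧
    ∀ θ' ∈ FeasMG Q Qa θlo θhi α β, empObj hK n Qa θ ≤ empObj hK n Qa θ'

/-- MFCQ for the true problem in standard form. -/
def MFCQG {K : ℕ} (G0 Ga : Measure (Fin K → ℝ)) (θlo θhi α β : ℝ)
    (θ : Fin K → ℝ) : Prop :=
  ∃ ξ : Fin K → ℝ,
    (1 - α - gNullG G0 θ = 0 →
      fderiv ℝ (fun t => 1 - α - gNullG G0 t) θ ξ < 0) ∧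
    (gAltG Ga θ - β = 0 →
      fderiv ℝ (fun t => gAltG Ga t - β) θ ξ < 0) ∧
    (∀ k, θlo - θ k = 0 →
      fderiv ℝ (fun t : Fin K → ℝ => θlo - t k) θ ξ < 0) ∧
    (∀ k, θ k - θhi = 0 →
      fderiv ℝ (fun t : Fin K → ℝ => t k - θhi) θ ξ < 0)

lemma ind_nonneg (p : Prop) : 0 ≤ ind p := by
  unfold ind; split <;> norm_num

lemma ind_le_one (p : Prop) : ind p ≤ 1 := by
  unfold ind; split <;> norm_num

lemma ind_mono {p q : Prop} (h : p → q) : ind p ≤ ind q := by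
  classical
  unfold ind
  by_cases hp : p
  · simp [hp, h hp]
  · simp only [hp, if_false]; exact ind_nonneg q

lemma ind_eq_indicator (S : Set α) (x : α) : ind (x ∈ S) = S.indicator (fun _ => (1:ℝ)) x := by
  classical
  unfold ind
  by_cases h : x ∈ S <;> simp [h, Set.indicator_apply]

lemma ind_zero_or_one (p : Prop) : ind p = 0 ∨ ind p = 1 := by
  unfold ind; split
  · right; rfl
  · left; rfl

section Meas
variable {K : ℕ}

lemma measSet_le (c : Fin K → ℝ) : MeasurableSet {q : Fin K → ℝ | ∀ k, q k ≤ c k} := by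
  have : {q : Fin K → ℝ | ∀ k, q k ≤ c k} = ⋂ k, (fun q : Fin K → ℝ => q k) ⁻¹' Set.Iic (c k) := by
    ext q; simp
  rw [this]
  exact MeasurableSet.iInter fun k => (measurable_pi_apply k) measurableSet_Iic

lemma measSet_lt (c : Fin K → ℝ) : MeasurableSet {q : Fin K → ℝ | ∀ k, q k < c k} := by
  have : {q : Fin K → ℝ | ∀ k, q k < c k} = ⋂ k, (fun q : Fin K → ℝ => q k) ⁻¹' Set.Iio (c k) := by
    ext q; simp
  rw [this]
  exact MeasurableSet.iInter fun k => (measurable_pi_apply k) measurableSet_Iio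

lemma measSet_slab (i : Fin K) (a b : ℝ) :
    MeasurableSet {q : Fin K → ℝ | a ≤ q i ∧ q i ≤ b} := by
  have : {q : Fin K → ℝ | a ≤ q i ∧ q i ≤ b} = (fun q : Fin K → ℝ => q i) ⁻¹' Set.Icc a b := rfl
  rw [this]; exact (measurable_pi_apply i) measurableSet_Icc

lemma measSet_coord_le (i : Fin K) (x : ℝ) : MeasurableSet {q : Fin K → ℝ | q i ≤ x} :=
  (measurable_pi_apply i) measurableSet_Iic

lemma measSet_coord_lt (i : Fin K) (x : ℝ) : MeasurableSet {q : Fin K → ℝ | q i < x} :=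
  (measurable_pi_apply i) measurableSet_Iio

lemma measSet_coord_eq (i : Fin K) (x : ℝ) : MeasurableSet {q : Fin K → ℝ | q i = x} := by
  have : {q : Fin K → ℝ | q i = x} = (fun q : Fin K → ℝ => q i) ⁻¹' {x} := rfl
  rw [this]; exact (measurable_pi_apply i) (measurableSet_singleton x)

end Meas

section Tail
variable {Ω : Type*} [MeasurableSpace Ω] {P : Measure Ω} [IsProbabilityMeasure P]

lemma integrable_of_zero_or_one {Y : Ω → ℝ} (hm : Measurable Y)
    (h01 : ∀ ω, Y ω = 0 ∨ Y ω = 1) : Integrable Y P := by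
  refine (integrable_const (1:ℝ)).mono' hm.aestronglyMeasurable ?_
  filter_upwards with ω
  rcases h01 ω with h | h <;> simp [h]

lemma mean_mem_unit {Y : Ω → ℝ} (hm : Measurable Y) (h01 : ∀ ω, Y ω = 0 ∨ Y ω = 1) :
    0 ≤ ∫ ω, Y ω ∂P ∧ ∫ ω, Y ω ∂P ≤ 1 := by
  constructor
  · exact integral_nonneg fun ω => by rcases h01 ω with h|h <;> simp [h]
  · have h1 : ∀ ω, Y ω ≤ 1 := fun ω => by rcases h01 ω with h|h <;> simp [h]
    have h2 := integral_mono (integrable_of_zero_or_one (P := P) hm h01) (integrable_const 1) h1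
    simpa using h2

lemma mgf_zero_one {Y : Ω → ℝ} (hm : Measurable Y) (h01 : ∀ ω, Y ω = 0 ∨ Y ω = 1) (l : ℝ) :
    mgf Y P l = 1 + (Real.exp l - 1) * ∫ ω, Y ω ∂P := by
  have hint : Integrable Y P := integrable_of_zero_or_one hm h01
  have heq : (fun ω => Real.exp (l * Y ω)) = fun ω => 1 + (Real.exp l - 1) * Y ω := by
    funext ω; rcases h01 ω with h|h <;> simp [h]
  unfold ProbabilityTheory.mgf
  rw [heq, integral_add (integrable_const 1) (hint.const_mul _), integral_const_mul]
  simp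

lemma exp_sub_one_sub_le {l : ℝ} (h0 : 0 ≤ l) (h1 : l ≤ 1) :
    Real.exp l - 1 - l ≤ 2 * l ^ 2 := by
  have hb := Real.exp_bound (x := l) (by rw [abs_of_nonneg h0]; exact h1) (n := 2) (by norm_num)
  have : Real.exp l - ∑ i ∈ Finset.range 2, l ^ i / i.factorial ≤ |l| ^ 2 * (3 / (2 * 2)) := by
    have := abs_le.mp hb
    exact this.2.trans (le_of_eq (by norm_num [Nat.factorial]))
  have hsum : ∑ i ∈ Finset.range 2, l ^ i / i.factorial = 1 + l := by
    simp [Finset.sum_range_succ, Nat.factorial]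
  rw [hsum, abs_of_nonneg h0] at this
  nlinarith [sq_nonneg l]

lemma tail_bound {M : ℕ} (hM : 1 ≤ M) (Y : Fin M → Ω → ℝ)
    (hmeas : ∀ m, Measurable (Y m)) (h01 : ∀ m ω, Y m ω = 0 ∨ Y m ω = 1)
    (hind : iIndepFun Y P)
    {p : ℝ} (hp : ∀ m, ∫ ω, Y m ω ∂P = p)
    {t : ℝ} (ht0 : 0 ≤ t) (ht1 : t ≤ 1) :
    P {ω | (M:ℝ)*p + (M:ℝ)*t ≤ ∑ m, Y m ω} ≤ ENNReal.ofReal (Real.exp (-(M:ℝ)*t^2/8)) := by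
  have hM0 : 0 < M := hM
  set l : ℝ := t/4 with hl
  have hl0 : 0 ≤ l := by positivity
  have hl1 : l ≤ 1 := by rw [hl]; linarith
  obtain ⟨hp0, hp1⟩ : 0 ≤ p ∧ p ≤ 1 := by
    have h := mean_mem_unit (P := P) (hmeas ⟨0, hM0⟩) (h01 ⟨0, hM0⟩)
    rwa [hp ⟨0, hM0⟩] at h
  set S : Ω → ℝ := fun ω => ∑ m, Y m ω with hS
  have hSmeas : Measurable S := Finset.measurable_sum _ fun m _ => hmeas m
  have hS_le : ∀ ω, S ω ≤ M := by
    intro ω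
    calc S ω ≤ ∑ _m : Fin M, (1:ℝ) :=
        Finset.sum_le_sum (fun m _ => by rcases h01 m ω with h|h <;> simp [h])
      _ = M := by simp
  have hint : Integrable (fun ω => Real.exp (l * S ω)) P := by
    refine (integrable_const (Real.exp (l * M))).mono'
      ((hSmeas.const_mul l).exp).aestronglyMeasurable ?_
    filter_upwards with ω
    rw [Real.norm_eq_abs, abs_of_pos (Real.exp_pos _), Real.exp_le_exp]
    exact mul_le_mul_of_nonneg_left (hS_le ω) hl0
  have hSsum : S = ∑ m : Fin M, Y m := by
    funext ω; rw [hS]; simp [Finset.sum_apply]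
  have hmgf : mgf S P l = (1 + (Real.exp l - 1) * p) ^ M := by
    rw [hSsum, hind.mgf_sum hmeas Finset.univ]
    have : ∀ m : Fin M, mgf (Y m) P l = 1 + (Real.exp l - 1) * p := by
      intro m; rw [mgf_zero_one (hmeas m) (h01 m), hp m]
    rw [Finset.prod_congr rfl (fun m _ => this m)]
    simp [Finset.prod_const]
  have hexpl1 : (1:ℝ) ≤ Real.exp l := by
    rw [← Real.exp_zero]; exact Real.exp_le_exp.mpr hl0
  have hbase : 1 + (Real.exp l - 1) * p ≤ Real.exp ((Real.exp l - 1) * p) := by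
    have := Real.add_one_le_exp ((Real.exp l - 1) * p)
    linarith
  have hbase0 : 0 ≤ 1 + (Real.exp l - 1) * p := by nlinarith
  have hmgf_le : mgf S P l ≤ Real.exp ((M:ℝ) * ((Real.exp l - 1) * p)) := by
    rw [hmgf]
    calc (1 + (Real.exp l - 1) * p) ^ M ≤ Real.exp ((Real.exp l - 1) * p) ^ M :=
        pow_le_pow_left₀ hbase0 hbase M
      _ = Real.exp ((M:ℝ) * ((Real.exp l - 1) * p)) := (Real.exp_nat_mul _ M).symm
  have hchern := measure_ge_le_exp_mul_mgf (X := S) (μ := P) ((M:ℝ)*p + (M:ℝ)*t) hl0 hint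
  have hE : Real.exp (-l * ((M:ℝ)*p + (M:ℝ)*t)) * Real.exp ((M:ℝ) * ((Real.exp l - 1) * p))
      ≤ Real.exp (-(M:ℝ)*t^2/8) := by
    rw [← Real.exp_add, Real.exp_le_exp]
    have htaylor : Real.exp l - 1 - l ≤ 2 * l ^ 2 := exp_sub_one_sub_le hl0 hl1
    have htaylor0 : 0 ≤ Real.exp l - 1 - l := by
      have := Real.add_one_le_exp l; linarith
    have hMr : (0:ℝ) ≤ (M:ℝ) := Nat.cast_nonneg M
    have key : p * (Real.exp l - 1 - l) ≤ 2 * l ^ 2 := by nlinarith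
    have : -l * ((M:ℝ)*p + (M:ℝ)*t) + (M:ℝ) * ((Real.exp l - 1) * p)
        = (M:ℝ) * (p * (Real.exp l - 1 - l)) - l * (M:ℝ) * t := by ring
    rw [this]
    have h1 : (M:ℝ) * (p * (Real.exp l - 1 - l)) ≤ (M:ℝ) * (2 * l ^ 2) :=
      mul_le_mul_of_nonneg_left key hMr
    have h2 : (M:ℝ) * (2 * l^2) - l * (M:ℝ) * t = -(M:ℝ)*t^2/8 := by
      rw [hl]; ring
    linarith
  have hfin : (P {ω | (M:ℝ)*p + (M:ℝ)*t ≤ S ω}).toReal ≤ Real.exp (-(M:ℝ)*t^2/8) := by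
    refine hchern.trans ?_
    calc Real.exp (-l * ((M:ℝ)*p + (M:ℝ)*t)) * mgf S P l
        ≤ Real.exp (-l * ((M:ℝ)*p + (M:ℝ)*t)) * Real.exp ((M:ℝ) * ((Real.exp l - 1) * p)) :=
          mul_le_mul_of_nonneg_left hmgf_le (le_of_lt (Real.exp_pos _))
      _ ≤ _ := hE
  have hne : P {ω | (M:ℝ)*p + (M:ℝ)*t ≤ S ω} ≠ ⊤ := measure_ne_top _ _
  calc P {ω | (M:ℝ)*p + (M:ℝ)*t ≤ ∑ m, Y m ω}
      = ENNReal.ofReal ((P {ω | (M:ℝ)*p + (M:ℝ)*t ≤ S ω}).toReal) := by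
        rw [ENNReal.ofReal_toReal hne]
    _ ≤ ENNReal.ofReal (Real.exp (-(M:ℝ)*t^2/8)) := ENNReal.ofReal_le_ofReal hfin

end Tail

section TwoSided
variable {Ω : Type*} [MeasurableSpace Ω] {P : Measure Ω} [IsProbabilityMeasure P]

lemma two_sided_dev {M : ℕ} (hM : 1 ≤ M) (Y : Fin M → Ω → ℝ)
    (hmeas : ∀ m, Measurable (Y m)) (h01 : ∀ m ω, Y m ω = 0 ∨ Y m ω = 1)
    (hind : iIndepFun Y P)
    {p : ℝ} (hp : ∀ m, ∫ ω, Y m ω ∂P = p)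
    {t : ℝ} (ht0 : 0 ≤ t) (ht1 : t ≤ 1) :
    P {ω | t < |(1/(M:ℝ)) * ∑ m, Y m ω - p|} ≤
      ENNReal.ofReal (2 * Real.exp (-(M:ℝ)*t^2/8)) := by
  have hMpos : (0:ℝ) < M := by exact_mod_cast hM
  set Z : Fin M → Ω → ℝ := fun m ω => 1 - Y m ω with hZ
  have hmeasZ : ∀ m, Measurable (Z m) := fun m => measurable_const.sub (hmeas m)
  have h01Z : ∀ m ω, Z m ω = 0 ∨ Z m ω = 1 := fun m ω => by
    rcases h01 m ω with h|h <;> simp [hZ, h]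
  have hindZ : iIndepFun Z P :=
    hind.comp (fun _ => fun x : ℝ => 1 - x) (fun _ => measurable_const.sub measurable_id)
  have hpZ : ∀ m, ∫ ω, Z m ω ∂P = 1 - p := fun m => by
    rw [hZ]
    rw [integral_sub (integrable_const 1) (integrable_of_zero_or_one (hmeas m) (h01 m))]
    simp [hp m]
  have hup := tail_bound hM Y hmeas h01 hind hp ht0 ht1
  have hdn := tail_bound hM Z hmeasZ h01Z hindZ hpZ ht0 ht1
  have hsumZ : ∀ ω, ∑ m, Z m ω = (M:ℝ) - ∑ m, Y m ω := by
    intro ω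
    rw [hZ]
    rw [Finset.sum_sub_distrib]
    simp
  have hsub : {ω | t < |(1/(M:ℝ)) * ∑ m, Y m ω - p|} ⊆
      {ω | (M:ℝ)*p + (M:ℝ)*t ≤ ∑ m, Y m ω} ∪
      {ω | (M:ℝ)*(1-p) + (M:ℝ)*t ≤ ∑ m, Z m ω} := by
    intro ω hω
    simp only [Set.mem_setOf_eq, Set.mem_union]
    have hω' : t < |(1/(M:ℝ)) * ∑ m, Y m ω - p| := hω
    rcases lt_abs.mp hω' with h | h
    · left
      have h1 : p + t ≤ (1/(M:ℝ)) * ∑ m, Y m ω := by linarith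
      have h2 := mul_le_mul_of_nonneg_left h1 (le_of_lt hMpos)
      have h3 : (M:ℝ) * ((1/(M:ℝ)) * ∑ m, Y m ω) = ∑ m, Y m ω := by
        field_simp
      nlinarith
    · right
      rw [hsumZ ω]
      have h1 : (1/(M:ℝ)) * ∑ m, Y m ω ≤ p - t := by linarith
      have h2 := mul_le_mul_of_nonneg_left h1 (le_of_lt hMpos)
      have h3 : (M:ℝ) * ((1/(M:ℝ)) * ∑ m, Y m ω) = ∑ m, Y m ω := by
        field_simp
      nlinarith
  calc P {ω | t < |(1/(M:ℝ)) * ∑ m, Y m ω - p|}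
      ≤ P ({ω | (M:ℝ)*p + (M:ℝ)*t ≤ ∑ m, Y m ω} ∪
          {ω | (M:ℝ)*(1-p) + (M:ℝ)*t ≤ ∑ m, Z m ω}) := measure_mono hsub
    _ ≤ P {ω | (M:ℝ)*p + (M:ℝ)*t ≤ ∑ m, Y m ω} +
        P {ω | (M:ℝ)*(1-p) + (M:ℝ)*t ≤ ∑ m, Z m ω} := measure_union_le _ _
    _ ≤ ENNReal.ofReal (Real.exp (-(M:ℝ)*t^2/8)) + ENNReal.ofReal (Real.exp (-(M:ℝ)*t^2/8)) :=
        add_le_add hup hdn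
    _ = ENNReal.ofReal (2 * Real.exp (-(M:ℝ)*t^2/8)) := by
        rw [← ENNReal.ofReal_add (Real.exp_pos _).le (Real.exp_pos _).le]
        ring_nf

end TwoSided

section Quantile
variable {K : ℕ}

lemma coord_atom_zero (μ : Measure (Fin K → ℝ)) (hac : μ ≪ (volume : Measure (Fin K → ℝ)))
    (i : Fin K) (x : ℝ) : μ {q | q i = x} = 0 := by
  refine hac ?_
  have hset : {q : Fin K → ℝ | q i = x} =
      Set.pi Set.univ (Function.update (fun _ : Fin K => (Set.univ : Set ℝ)) i {x}) := by
    ext q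
    simp only [Set.mem_setOf_eq, Set.mem_univ_pi, Function.update_apply]
    constructor
    · intro h j
      split_ifs with hj
      · subst hj; simpa using h
      · trivial
    · intro h
      have := h i
      simpa using this
  rw [hset, volume_pi, Measure.pi_pi]
  refine Finset.prod_eq_zero (Finset.mem_univ i) ?_
  simp

lemma exists_quantile (μ : Measure (Fin K → ℝ)) [IsProbabilityMeasure μ]
    (i : Fin K) {l : ℝ} (hl0 : 0 < l) (hl1 : l < 1) :
    ∃ x : ℝ, μ {q | q i < x} ≤ ENNReal.ofReal l ∧ ENNReal.ofReal l ≤ μ {q | q i ≤ x} := by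
  set F : ℝ → ℝ≥0∞ := fun y => μ {q | q i ≤ y} with hF
  have hFmono : ∀ {y z : ℝ}, y ≤ z → F y ≤ F z := fun {y z} hyz =>
    measure_mono (fun q hq => le_trans hq hyz)
  have hl1' : ENNReal.ofReal l < 1 := by
    rw [← ENNReal.ofReal_one]
    exact (ENNReal.ofReal_lt_ofReal_iff one_pos).mpr hl1
  have hl0' : (0:ℝ≥0∞) < ENNReal.ofReal l := ENNReal.ofReal_pos.mpr hl0
  have hS_ne : ∃ y : ℝ, ENNReal.ofReal l ≤ F y := by
    have hmono : Monotone (fun n : ℕ => {q : Fin K → ℝ | q i ≤ (n:ℝ)}) := by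
      intro a b hab q hq
      simp only [Set.mem_setOf_eq] at hq ⊢
      exact le_trans hq (by exact_mod_cast hab)
    have hU : (⋃ n : ℕ, {q : Fin K → ℝ | q i ≤ (n:ℝ)}) = Set.univ := by
      ext q; simp only [Set.mem_iUnion, Set.mem_univ, iff_true]
      obtain ⟨n, hn⟩ := exists_nat_ge (q i); exact ⟨n, hn⟩
    have htop := tendsto_measure_iUnion_atTop (μ := μ) hmono
    rw [hU, measure_univ] at htop
    have hev : ∀ᶠ n : ℕ in Filter.atTop, ENNReal.ofReal l < F n :=
      htop.eventually (eventually_gt_nhds hl1')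
    obtain ⟨n, hn⟩ := hev.exists
    exact ⟨n, hn.le⟩
  have hlb : ∃ z : ℝ, ∀ y, ENNReal.ofReal l ≤ F y → z ≤ y := by
    have hanti : Antitone (fun n : ℕ => {q : Fin K → ℝ | q i ≤ -(n:ℝ)}) := by
      intro a b hab q hq
      have hba : -(b:ℝ) ≤ -(a:ℝ) := by exact_mod_cast neg_le_neg (by exact_mod_cast hab)
      simp only [Set.mem_setOf_eq] at hq ⊢
      exact le_trans hq hba
    have hI : (⋂ n : ℕ, {q : Fin K → ℝ | q i ≤ -(n:ℝ)}) = ∅ := by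
      ext q; simp only [Set.mem_iInter, Set.mem_setOf_eq, Set.mem_empty_iff_false, iff_false,
        not_forall, not_le]
      obtain ⟨n, hn⟩ := exists_nat_gt (-(q i))
      exact ⟨n, by linarith⟩
    have hbot := tendsto_measure_iInter_atTop (μ := μ)
      (fun n => (measSet_coord_le i _).nullMeasurableSet) hanti ⟨0, measure_ne_top _ _⟩
    rw [hI, measure_empty] at hbot
    have hev : ∀ᶠ n : ℕ in Filter.atTop, F (-(n:ℝ)) < ENNReal.ofReal l :=
      hbot.eventually (eventually_lt_nhds hl0')
    obtain ⟨n, hn⟩ := hev.exists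
    refine ⟨-(n:ℝ), fun y hy => ?_⟩
    by_contra hc; push_neg at hc
    exact absurd (le_trans hy (hFmono hc.le)) (not_le.mpr hn)
  set Sset : Set ℝ := {y | ENNReal.ofReal l ≤ F y} with hSset
  obtain ⟨y0, hy0⟩ := hS_ne
  obtain ⟨z, hz⟩ := hlb
  have hne : Sset.Nonempty := ⟨y0, hy0⟩
  have hbdd : BddBelow Sset := ⟨z, fun y hy => hz y hy⟩
  set x := sInf Sset with hx
  refine ⟨x, ?_, ?_⟩
  · have hU : {q : Fin K → ℝ | q i < x} = ⋃ n : ℕ, {q | q i ≤ x - 1/(n+1)} := by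
      ext q; simp only [Set.mem_setOf_eq, Set.mem_iUnion]
      constructor
      · intro h
        obtain ⟨n, hn⟩ := exists_nat_one_div_lt (sub_pos.mpr h)
        exact ⟨n, by push_cast at hn ⊢; linarith⟩
      · rintro ⟨n, hn⟩
        have hpos : (0:ℝ) < 1/((n:ℝ)+1) := by positivity
        linarith
    rw [hU]
    have hmono : Monotone (fun n : ℕ => {q : Fin K → ℝ | q i ≤ x - 1/((n:ℝ)+1)}) := by
      intro a b hab q hq
      have h1 : (1:ℝ)/((b:ℝ)+1) ≤ 1/((a:ℝ)+1) := by
        apply one_div_le_one_div_of_le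
        · positivity
        · exact_mod_cast by linarith [(Nat.cast_le (α := ℝ)).mpr hab]
      simp only [Set.mem_setOf_eq] at hq ⊢
      linarith
    have htend := tendsto_measure_iUnion_atTop (μ := μ) hmono
    refine le_of_tendsto htend (Filter.Eventually.of_forall fun n => ?_)
    have hlt : x - 1/((n:ℝ)+1) < x := by
      have : (0:ℝ) < 1/((n:ℝ)+1) := by positivity
      linarith
    have hnotmem : x - 1/((n:ℝ)+1) ∉ Sset := fun hmem =>
      absurd (csInf_le hbdd hmem) (not_le.mpr hlt)
    have : ¬ (ENNReal.ofReal l ≤ F (x - 1/((n:ℝ)+1))) := hnotmem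
    exact (not_le.mp this).le
  · have hanti : Antitone (fun n : ℕ => {q : Fin K → ℝ | q i ≤ x + 1/((n:ℝ)+1)}) := by
      intro a b hab q hq
      have h1 : (1:ℝ)/((b:ℝ)+1) ≤ 1/((a:ℝ)+1) := by
        apply one_div_le_one_div_of_le
        · positivity
        · exact_mod_cast by linarith [(Nat.cast_le (α := ℝ)).mpr hab]
      simp only [Set.mem_setOf_eq] at hq ⊢
      linarith
    have hI : (⋂ n : ℕ, {q : Fin K → ℝ | q i ≤ x + 1/((n:ℝ)+1)}) = {q : Fin K → ℝ | q i ≤ x} := by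
      ext q; simp only [Set.mem_iInter, Set.mem_setOf_eq]
      constructor
      · intro h
        by_contra hc; push_neg at hc
        obtain ⟨n, hn⟩ := exists_nat_one_div_lt (sub_pos.mpr hc)
        have := h n
        push_cast at hn
        linarith
      · intro h n
        have hpos : (0:ℝ) < 1/((n:ℝ)+1) := by positivity
        linarith
    have htend := tendsto_measure_iInter_atTop (μ := μ)
      (fun n => (measSet_coord_le i _).nullMeasurableSet) hanti ⟨0, measure_ne_top _ _⟩
    rw [hI] at htend
    refine ge_of_tendsto htend (Filter.Eventually.of_forall fun n => ?_)
    have hlt : x < x + 1/((n:ℝ)+1) := by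
      have : (0:ℝ) < 1/((n:ℝ)+1) := by positivity
      linarith
    obtain ⟨s, hsmem, hs⟩ := (csInf_lt_iff hbdd hne).mp hlt
    exact le_trans hsmem (hFmono hs.le)

end Quantile

section Slab
variable {K : ℕ}

lemma slab_bound (μ : Measure (Fin K → ℝ)) [IsProbabilityMeasure μ]
    (hac : μ ≪ (volume : Measure (Fin K → ℝ))) (i : Fin K) {N : ℕ} (hN : 1 ≤ N)
    (xq : ℕ → ℝ)
    (hq : ∀ j, 1 ≤ j → j ≤ N - 1 →
      μ {q | q i < xq j} ≤ ENNReal.ofReal ((j:ℝ)/N) ∧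
      ENNReal.ofReal ((j:ℝ)/N) ≤ μ {q | q i ≤ xq j})
    {a b : ℝ} (hab : a ≤ b) (hgap : ∀ j, 1 ≤ j → j ≤ N - 1 → xq j ≤ a ∨ b ≤ xq j) :
    (μ {q | a ≤ q i ∧ q i ≤ b}).toReal ≤ 1 / N := by
  classical
  have hNpos : (0:ℝ) < N := by exact_mod_cast hN
  have hupb : ∀ c : ℝ, b ≤ c → ∀ r : ℝ, μ {q : Fin K → ℝ | q i < c} ≤ ENNReal.ofReal r →
      μ {q : Fin K → ℝ | q i ≤ b} ≤ ENNReal.ofReal r := by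
    intro c hc r hr
    have hsub : {q : Fin K → ℝ | q i ≤ b} ⊆ {q | q i < c} ∪ {q | q i = b} := by
      intro q hq'
      have hq'' : q i ≤ b := hq'
      rcases lt_or_eq_of_le hq'' with h|h
      · exact Or.inl (lt_of_lt_of_le h hc)
      · exact Or.inr h
    calc μ {q : Fin K → ℝ | q i ≤ b}
        ≤ μ {q : Fin K → ℝ | q i < c} + μ {q : Fin K → ℝ | q i = b} :=
          le_trans (measure_mono hsub) (measure_union_le _ _)
      _ = μ {q : Fin K → ℝ | q i < c} := by rw [coord_atom_zero μ hac i b, add_zero]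
      _ ≤ ENNReal.ofReal r := hr
  have hmain : μ {q : Fin K → ℝ | q i ≤ b} ≤
      ENNReal.ofReal (1/(N:ℝ)) + μ {q : Fin K → ℝ | q i < a} := by
    by_cases hN1 : N = 1
    · have h1 : ENNReal.ofReal (1/(N:ℝ)) = 1 := by rw [hN1]; norm_num
      calc μ {q : Fin K → ℝ | q i ≤ b} ≤ 1 := prob_le_one
        _ ≤ _ := by rw [h1]; exact le_self_add
    · have hN2 : 1 < N := by omega
      by_cases hJne : ((Finset.Icc 1 (N-1)).filter (fun j => xq j ≤ a)).Nonempty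
      · obtain ⟨j0, hj0⟩ : ∃ j0, j0 = ((Finset.Icc 1 (N-1)).filter (fun j => xq j ≤ a)).max' hJne :=
          ⟨_, rfl⟩
        have hj0mem : j0 ∈ (Finset.Icc 1 (N-1)).filter (fun j => xq j ≤ a) := by
          rw [hj0]; exact Finset.max'_mem _ _
        rw [Finset.mem_filter, Finset.mem_Icc] at hj0mem
        obtain ⟨⟨hj01, hj0N⟩, hj0a⟩ := hj0mem
        have hlow : ENNReal.ofReal ((j0:ℝ)/N) ≤ μ {q : Fin K → ℝ | q i < a} := by
          have hsub : {q : Fin K → ℝ | q i ≤ xq j0} ⊆ {q | q i < a} ∪ {q | q i = a} := by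
            intro q hq'
            have hq'' : q i ≤ xq j0 := hq'
            rcases lt_or_eq_of_le (le_trans hq'' hj0a) with h|h
            · exact Or.inl h
            · exact Or.inr h
          calc ENNReal.ofReal ((j0:ℝ)/N) ≤ μ {q : Fin K → ℝ | q i ≤ xq j0} := (hq j0 hj01 hj0N).2
            _ ≤ μ ({q : Fin K → ℝ | q i < a} ∪ {q : Fin K → ℝ | q i = a}) := measure_mono hsub
            _ ≤ μ {q : Fin K → ℝ | q i < a} + μ {q : Fin K → ℝ | q i = a} := measure_union_le _ _
            _ = μ {q : Fin K → ℝ | q i < a} := by rw [coord_atom_zero μ hac i a, add_zero]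
        by_cases hj0top : j0 + 1 ≤ N - 1
        · have hj11 : 1 ≤ j0 + 1 := by omega
          have hnotJ : ¬ (xq (j0+1) ≤ a) := by
            intro hc
            have hmem : j0 + 1 ∈ (Finset.Icc 1 (N-1)).filter (fun j => xq j ≤ a) := by
              rw [Finset.mem_filter, Finset.mem_Icc]
              exact ⟨⟨by omega, hj0top⟩, hc⟩
            have := Finset.le_max' _ _ hmem
            omega
          have hbxq : b ≤ xq (j0+1) := (hgap (j0+1) hj11 hj0top).resolve_left hnotJ
          have hup := hupb (xq (j0+1)) hbxq (((j0+1:ℕ):ℝ)/N) (hq (j0+1) hj11 hj0top).1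
          calc μ {q : Fin K → ℝ | q i ≤ b} ≤ ENNReal.ofReal (((j0+1:ℕ):ℝ)/N) := hup
            _ = ENNReal.ofReal (1/(N:ℝ) + (j0:ℝ)/N) := by push_cast; ring_nf
            _ = ENNReal.ofReal (1/(N:ℝ)) + ENNReal.ofReal ((j0:ℝ)/N) :=
              ENNReal.ofReal_add (by positivity) (by positivity)
            _ ≤ _ := add_le_add le_rfl hlow
        · have hj0eq : j0 = N - 1 := by omega
          have h1 : (1:ℝ) = 1/(N:ℝ) + (j0:ℝ)/N := by
            rw [hj0eq]
            rw [Nat.cast_sub (by omega)]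
            push_cast
            field_simp
            ring
          calc μ {q : Fin K → ℝ | q i ≤ b} ≤ 1 := prob_le_one
            _ = ENNReal.ofReal (1/(N:ℝ) + (j0:ℝ)/N) := by rw [← h1, ENNReal.ofReal_one]
            _ = ENNReal.ofReal (1/(N:ℝ)) + ENNReal.ofReal ((j0:ℝ)/N) :=
              ENNReal.ofReal_add (by positivity) (by positivity)
            _ ≤ _ := add_le_add le_rfl hlow
      · have h1N : 1 ≤ N - 1 := by omega
        have hnot : ¬ (xq 1 ≤ a) := by
          intro hc
          exact hJne ⟨1, by rw [Finset.mem_filter, Finset.mem_Icc]; exact ⟨⟨le_rfl, h1N⟩, hc⟩⟩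
        have hbxq : b ≤ xq 1 := (hgap 1 le_rfl h1N).resolve_left hnot
        have hup := hupb (xq 1) hbxq ((1:ℝ)/N) (by simpa using (hq 1 le_rfl h1N).1)
        exact le_trans hup le_self_add
  have hdisj : Disjoint {q : Fin K → ℝ | a ≤ q i ∧ q i ≤ b} {q : Fin K → ℝ | q i < a} := by
    rw [Set.disjoint_left]
    rintro q ⟨h1, _⟩ h2
    exact absurd h2 (not_lt.mpr h1)
  have hsplit : μ {q : Fin K → ℝ | a ≤ q i ∧ q i ≤ b} + μ {q : Fin K → ℝ | q i < a}
      = μ {q : Fin K → ℝ | q i ≤ b} := by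
    rw [← measure_union hdisj (measSet_coord_lt i a)]
    congr 1
    ext q; simp only [Set.mem_union, Set.mem_setOf_eq]
    constructor
    · rintro (⟨_, h2⟩|h)
      · exact h2
      · exact le_trans h.le hab
    · intro h
      rcases lt_or_ge (q i) a with h'|h'
      · exact Or.inr h'
      · exact Or.inl ⟨h', h⟩
  have hslab : μ {q : Fin K → ℝ | a ≤ q i ∧ q i ≤ b} ≤ ENNReal.ofReal (1/(N:ℝ)) := by
    refine (ENNReal.add_le_add_iff_right (measure_ne_top μ {q : Fin K → ℝ | q i < a})).mp ?_
    rw [hsplit]; exact hmain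
  exact ENNReal.toReal_le_of_le_ofReal (by positivity) hslab

end Slab

section Grid
variable {K : ℕ}

lemma exists_grid (G0 Ga : Measure (Fin K → ℝ)) [IsProbabilityMeasure G0] [IsProbabilityMeasure Ga]
    (hac0 : G0 ≪ (volume : Measure (Fin K → ℝ))) (haca : Ga ≪ (volume : Measure (Fin K → ℝ)))
    (i : Fin K) {N : ℕ} (hN : 1 ≤ N) (θlo θhi : ℝ) (hθ : θlo ≤ θhi) :
    ∃ T : Finset ℝ, θlo ∈ T ∧ θhi ∈ T ∧ T.card ≤ 2*N + 2 ∧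
      ∀ x ∈ Set.Icc θlo θhi, ∃ a ∈ T, ∃ b ∈ T, a ≤ x ∧ x ≤ b ∧
        (G0 {q | a ≤ q i ∧ q i ≤ b}).toReal ≤ 1/N ∧
        (Ga {q | a ≤ q i ∧ q i ≤ b}).toReal ≤ 1/N := by
  classical
  have hNpos : (0:ℝ) < N := by exact_mod_cast hN
  have hquant : ∀ (μ : Measure (Fin K → ℝ)), IsProbabilityMeasure μ → ∃ xq : ℕ → ℝ,
      ∀ j, 1 ≤ j → j ≤ N-1 →
        μ {q | q i < xq j} ≤ ENNReal.ofReal ((j:ℝ)/N) ∧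
        ENNReal.ofReal ((j:ℝ)/N) ≤ μ {q | q i ≤ xq j} := by
    intro μ hμ
    have hstep : ∀ j : ℕ, ∃ x : ℝ, 1 ≤ j → j ≤ N-1 →
        μ {q | q i < x} ≤ ENNReal.ofReal ((j:ℝ)/N) ∧
        ENNReal.ofReal ((j:ℝ)/N) ≤ μ {q | q i ≤ x} := by
      intro j
      by_cases hj : 1 ≤ j ∧ j ≤ N - 1
      · have hl0 : (0:ℝ) < (j:ℝ)/N := by
          have : (1:ℝ) ≤ (j:ℝ) := by exact_mod_cast hj.1
          positivity
        have hl1 : (j:ℝ)/N < 1 := by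
          rw [div_lt_one hNpos]
          exact_mod_cast by omega
        obtain ⟨x, hx⟩ := exists_quantile μ i hl0 hl1
        exact ⟨x, fun _ _ => hx⟩
      · exact ⟨0, fun h1 h2 => absurd ⟨h1, h2⟩ hj⟩
    choose xq hxq using hstep
    exact ⟨xq, fun j h1 h2 => hxq j h1 h2⟩
  obtain ⟨x0, hq0⟩ := hquant G0 inferInstance
  obtain ⟨xa, hqa⟩ := hquant Ga inferInstance
  set Tq : Finset ℝ := ((Finset.Ico 1 N).image x0 ∪ (Finset.Ico 1 N).image xa).filter
    (fun s => θlo ≤ s ∧ s ≤ θhi) with hTq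
  set T : Finset ℝ := insert θlo (insert θhi Tq) with hT
  have hlo : θlo ∈ T := by simp [hT]
  have hhi : θhi ∈ T := by simp [hT]
  have hTicc : ∀ s ∈ T, θlo ≤ s ∧ s ≤ θhi := by
    intro s hs
    rw [hT] at hs
    simp only [Finset.mem_insert] at hs
    rcases hs with rfl | rfl | hs
    · exact ⟨le_rfl, hθ⟩
    · exact ⟨hθ, le_rfl⟩
    · rw [hTq, Finset.mem_filter] at hs
      exact hs.2
  have hcard : T.card ≤ 2*N + 2 := by
    have h1 : T.card ≤ Tq.card + 2 := by
      rw [hT]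
      calc (insert θlo (insert θhi Tq)).card ≤ (insert θhi Tq).card + 1 :=
          Finset.card_insert_le _ _
        _ ≤ Tq.card + 1 + 1 := by
          have := Finset.card_insert_le θhi Tq
          omega
        _ = Tq.card + 2 := by omega
    have h2 : Tq.card ≤ 2*N := by
      rw [hTq]
      calc (((Finset.Ico 1 N).image x0 ∪ (Finset.Ico 1 N).image xa).filter _).card
          ≤ ((Finset.Ico 1 N).image x0 ∪ (Finset.Ico 1 N).image xa).card :=
            Finset.card_filter_le _ _
        _ ≤ ((Finset.Ico 1 N).image x0).card + ((Finset.Ico 1 N).image xa).card :=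
            Finset.card_union_le _ _
        _ ≤ (Finset.Ico 1 N).card + (Finset.Ico 1 N).card :=
            add_le_add (Finset.card_image_le) (Finset.card_image_le)
        _ ≤ 2*N := by rw [Nat.card_Ico]; omega
    omega
  refine ⟨T, hlo, hhi, hcard, ?_⟩
  intro x hx
  obtain ⟨hx1, hx2⟩ := hx
  have hAne : (T.filter (fun s => s ≤ x)).Nonempty := ⟨θlo, by
    rw [Finset.mem_filter]; exact ⟨hlo, hx1⟩⟩
  have hBne : (T.filter (fun s => x ≤ s)).Nonempty := ⟨θhi, by
    rw [Finset.mem_filter]; exact ⟨hhi, hx2⟩⟩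
  set a := (T.filter (fun s => s ≤ x)).max' hAne with ha
  set b := (T.filter (fun s => x ≤ s)).min' hBne with hb
  have haT : a ∈ T ∧ a ≤ x := by
    have := Finset.max'_mem _ hAne
    rw [Finset.mem_filter] at this
    exact this
  have hbT : b ∈ T ∧ x ≤ b := by
    have := Finset.min'_mem _ hBne
    rw [Finset.mem_filter] at this
    exact this
  have hab : a ≤ b := le_trans haT.2 hbT.2
  have hgap : ∀ (xq : ℕ → ℝ), (∀ j ∈ Finset.Ico 1 N, xq j ∈ ((Finset.Ico 1 N).image xq : Finset ℝ)) →
      ((Finset.Ico 1 N).image xq ⊆ ((Finset.Ico 1 N).image x0 ∪ (Finset.Ico 1 N).image xa)) →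
      ∀ j, 1 ≤ j → j ≤ N - 1 → xq j ≤ a ∨ b ≤ xq j := by
    intro xq hmem hsub j hj1 hjN
    by_contra hc
    push_neg at hc
    obtain ⟨hc1, hc2⟩ := hc
    have hjIco : j ∈ Finset.Ico 1 N := by
      rw [Finset.mem_Ico]; omega
    have hxqicc : θlo ≤ xq j ∧ xq j ≤ θhi := by
      constructor
      · exact le_trans (hTicc a haT.1).1 (le_of_lt hc1)
      · exact le_trans (le_of_lt hc2) (hTicc b hbT.1).2
    have hxqT : xq j ∈ T := by
      rw [hT]
      refine Finset.mem_insert_of_mem (Finset.mem_insert_of_mem ?_)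
      rw [hTq, Finset.mem_filter]
      exact ⟨hsub (hmem j hjIco), hxqicc⟩
    rcases le_or_gt (xq j) x with h | h
    · have : xq j ∈ T.filter (fun s => s ≤ x) := by rw [Finset.mem_filter]; exact ⟨hxqT, h⟩
      exact absurd (Finset.le_max' _ _ this) (not_le.mpr hc1)
    · have : xq j ∈ T.filter (fun s => x ≤ s) := by
        rw [Finset.mem_filter]; exact ⟨hxqT, h.le⟩
      exact absurd (Finset.min'_le _ _ this) (not_le.mpr hc2)
  have hgap0 : ∀ j, 1 ≤ j → j ≤ N - 1 → x0 j ≤ a ∨ b ≤ x0 j := by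
    refine hgap x0 (fun j hj => Finset.mem_image_of_mem x0 hj) (fun s hs => ?_)
    exact Finset.mem_union_left _ hs
  have hgapa : ∀ j, 1 ≤ j → j ≤ N - 1 → xa j ≤ a ∨ b ≤ xa j := by
    refine hgap xa (fun j hj => Finset.mem_image_of_mem xa hj) (fun s hs => ?_)
    exact Finset.mem_union_right _ hs
  exact ⟨a, haT.1, b, hbT.1, haT.2, hbT.2,
    slab_bound G0 hac0 i hN x0 hq0 hab hgap0,
    slab_bound Ga haca i hN xa hqa hab hgapa⟩

end Grid

section Det
variable {K M : ℕ}

lemma gNull_mono (G0 : Measure (Fin K → ℝ)) [IsFiniteMeasure G0] {θ θ' : Fin K → ℝ} (h : ∀ i, θ i ≤ θ' i) :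
    gNullG G0 θ ≤ gNullG G0 θ' := by
  refine ENNReal.toReal_mono (measure_ne_top _ _) (measure_mono ?_)
  intro q hq
  intro k
  exact le_trans (hq k) (h k)

lemma gAlt_mono (Ga : Measure (Fin K → ℝ)) [IsFiniteMeasure Ga] {θ θ' : Fin K → ℝ} (h : ∀ i, θ i ≤ θ' i) :
    gAltG Ga θ ≤ gAltG Ga θ' := by
  refine ENNReal.toReal_mono (measure_ne_top _ _) (measure_mono ?_)
  intro q hq k
  exact lt_of_lt_of_le (hq k) (h k)

lemma empNull_mono (Q : Fin M → Fin K → ℝ) {θ θ' : Fin K → ℝ} (h : ∀ i, θ i ≤ θ' i) :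
    empNull Q θ ≤ empNull Q θ' := by
  unfold empNull
  refine mul_le_mul_of_nonneg_left ?_ (by positivity)
  refine Finset.sum_le_sum fun m _ => ind_mono fun hm k => le_trans (hm k) (h k)

lemma empAlt_mono (Qa : Fin M → Fin K → ℝ) {θ θ' : Fin K → ℝ} (h : ∀ i, θ i ≤ θ' i) :
    empAlt Qa θ ≤ empAlt Qa θ' := by
  unfold empAlt
  refine mul_le_mul_of_nonneg_left ?_ (by positivity)
  refine Finset.sum_le_sum fun m _ => ind_mono fun hm k => lt_of_lt_of_le (hm k) (h k)

lemma det_incl (G0 Ga : Measure (Fin K → ℝ)) [IsFiniteMeasure G0] [IsFiniteMeasure Ga]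
    (Q Qa : Fin M → Fin K → ℝ) (θlo θhi α β t D ε : ℝ)
    (ht : 0 ≤ t) (hD : 0 ≤ D) (hε : 3*t + 2*D ≤ ε)
    (corner : (Fin K → ℝ) → Prop)
    (hbr : ∀ θ, inBox θlo θhi θ → ∃ aa bb : Fin K → ℝ, corner aa ∧ corner bb ∧
      (∀ i, aa i ≤ θ i) ∧ (∀ i, θ i ≤ bb i) ∧
      gNullG G0 bb ≤ gNullG G0 aa + D ∧ gAltG Ga bb ≤ gAltG Ga aa + D)
    (hdev0 : ∀ c, corner c → |empNull Q c - gNullG G0 c| ≤ t)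
    (hdeva : ∀ c, corner c → |empAlt Qa c - gAltG Ga c| ≤ t) :
    (FeasG G0 Ga θlo θhi (α - ε) (β - ε) ⊆ FeasMG Q Qa θlo θhi α β) ∧
    (FeasMG Q Qa θlo θhi α β ⊆ FeasG G0 Ga θlo θhi (α + ε) (β + ε)) := by
  constructor
  · rintro θ ⟨hbox, hnull, halt⟩
    obtain ⟨aa, bb, hca, hcb, hle, hge, hdn, hda⟩ := hbr θ hbox
    refine ⟨hbox, ?_, ?_⟩
    · have e1 : empNull Q aa ≤ empNull Q θ := empNull_mono Q hle
      have e2 := abs_le.mp (hdev0 aa hca)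
      have e3 : gNullG G0 θ ≤ gNullG G0 bb := gNull_mono G0 hge
      have := e2.1
      have := e2.2
      linarith
    · have a1 : empAlt Qa θ ≤ empAlt Qa bb := empAlt_mono Qa hge
      have a2 := abs_le.mp (hdeva bb hcb)
      have a3 : gAltG Ga aa ≤ gAltG Ga θ := gAlt_mono Ga hle
      have := a2.1
      have := a2.2
      linarith
  · rintro θ ⟨hbox, hnull, halt⟩
    obtain ⟨aa, bb, hca, hcb, hle, hge, hdn, hda⟩ := hbr θ hbox
    refine ⟨hbox, ?_, ?_⟩
    · have g1 : gNullG G0 aa ≤ gNullG G0 θ := gNull_mono G0 hle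
      have g2 := abs_le.mp (hdev0 aa hca)
      have g3 := abs_le.mp (hdev0 bb hcb)
      have g5 : empNull Q θ ≤ empNull Q bb := empNull_mono Q hge
      have := g2.1; have := g2.2; have := g3.1; have := g3.2
      linarith
    · have a1 : gAltG Ga θ ≤ gAltG Ga bb := gAlt_mono Ga hge
      have a2 := abs_le.mp (hdeva aa hca)
      have a3 : empAlt Qa aa ≤ empAlt Qa θ := empAlt_mono Qa hle
      have := a2.1; have := a2.2
      linarith

lemma det_trivial (G0 Ga : Measure (Fin K → ℝ)) [IsProbabilityMeasure G0] [IsProbabilityMeasure Ga]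
    (Q Qa : Fin M → Fin K → ℝ) (θlo θhi α β ε : ℝ)
    (hα0 : 0 < α) (hβ0 : 0 < β) (hβ1 : β < 1) (hε : 1 < ε) :
    (FeasG G0 Ga θlo θhi (α - ε) (β - ε) ⊆ FeasMG Q Qa θlo θhi α β) ∧
    (FeasMG Q Qa θlo θhi α β ⊆ FeasG G0 Ga θlo θhi (α + ε) (β + ε)) := by
  constructor
  · rintro θ ⟨hbox, hnull, halt⟩
    exfalso
    have h0 : 0 ≤ gAltG Ga θ := ENNReal.toReal_nonneg
    have : gAltG Ga θ ≤ β - ε := halt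
    linarith
  · rintro θ ⟨hbox, _, _⟩
    refine ⟨hbox, ?_, ?_⟩
    · have h0 : 0 ≤ gNullG G0 θ := ENNReal.toReal_nonneg
      linarith
    · have h1 : gAltG Ga θ ≤ 1 := by
        unfold gAltG
        have := ENNReal.toReal_mono (by norm_num) (prob_le_one (μ := Ga)
          (s := {q | ∀ k, q k < θ k}))
        simpa using this
      linarith

end Det

section Indep

lemma iIndepFun_inl {Ω : Type*} [MeasurableSpace Ω] {P : Measure Ω} {ι ι' : Type*}
    {β : Type*} [MeasurableSpace β] {f : ι ⊕ ι' → Ω → β}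
    (h : iIndepFun f P) :
    iIndepFun (fun m : ι => f (Sum.inl m)) P := by
  classical
  rw [iIndepFun_iff_measure_inter_preimage_eq_mul] at h ⊢
  intro S sets hsets
  have key := h (S.map ⟨Sum.inl, Sum.inl_injective⟩)
    (sets := fun i => Sum.elim sets (fun _ => Set.univ) i) ?_
  · have h1 : (⋂ i ∈ S.map ⟨Sum.inl, Sum.inl_injective⟩,
        f i ⁻¹' Sum.elim sets (fun _ => Set.univ) i)
        = ⋂ m ∈ S, f (Sum.inl m) ⁻¹' sets m := by
      ext ω
      simp only [Set.mem_iInter, Finset.mem_map, Function.Embedding.coeFn_mk]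
      constructor
      · intro hh m hm
        have := hh (Sum.inl m) ⟨m, hm, rfl⟩
        simpa using this
      · rintro hh i ⟨m, hm, rfl⟩
        simpa using hh m hm
    have h2 : ∏ i ∈ S.map ⟨Sum.inl, Sum.inl_injective⟩,
        P (f i ⁻¹' Sum.elim sets (fun _ => Set.univ) i)
        = ∏ m ∈ S, P (f (Sum.inl m) ⁻¹' sets m) := by
      rw [Finset.prod_map]
      rfl
    rw [h1, h2] at key
    exact key
  · intro i hi
    rw [Finset.mem_map] at hi
    obtain ⟨m, hm, rfl⟩ := hi
    simpa using hsets m hm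

lemma iIndepFun_inr {Ω : Type*} [MeasurableSpace Ω] {P : Measure Ω} {ι ι' : Type*}
    {β : Type*} [MeasurableSpace β] {f : ι ⊕ ι' → Ω → β}
    (h : iIndepFun f P) :
    iIndepFun (fun m : ι' => f (Sum.inr m)) P := by
  classical
  rw [iIndepFun_iff_measure_inter_preimage_eq_mul] at h ⊢
  intro S sets hsets
  have key := h (S.map ⟨Sum.inr, Sum.inr_injective⟩)
    (sets := fun i => Sum.elim (fun _ => Set.univ) sets i) ?_
  · have h1 : (⋂ i ∈ S.map ⟨Sum.inr, Sum.inr_injective⟩,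
        f i ⁻¹' Sum.elim (fun _ => Set.univ) sets i)
        = ⋂ m ∈ S, f (Sum.inr m) ⁻¹' sets m := by
      ext ω
      simp only [Set.mem_iInter, Finset.mem_map, Function.Embedding.coeFn_mk]
      constructor
      · intro hh m hm
        have := hh (Sum.inr m) ⟨m, hm, rfl⟩
        simpa using this
      · rintro hh i ⟨m, hm, rfl⟩
        simpa using hh m hm
    have h2 : ∏ i ∈ S.map ⟨Sum.inr, Sum.inr_injective⟩,
        P (f i ⁻¹' Sum.elim (fun _ => Set.univ) sets i)
        = ∏ m ∈ S, P (f (Sum.inr m) ⁻¹' sets m) := by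
      rw [Finset.prod_map]
      rfl
    rw [h1, h2] at key
    exact key
  · intro i hi
    rw [Finset.mem_map] at hi
    obtain ⟨m, hm, rfl⟩ := hi
    simpa using hsets m hm

end Indep

section Corner
variable {K : ℕ} {Ω : Type*} [MeasurableSpace Ω] {P : Measure Ω} [IsProbabilityMeasure P]

lemma corner_dev_null {M : ℕ} (hM : 1 ≤ M) (G0 : Measure (Fin K → ℝ)) [IsProbabilityMeasure G0]
    (Q : Fin M → Ω → Fin K → ℝ) (hQm : ∀ m, Measurable (Q m))
    (hQd : ∀ m, P.map (Q m) = G0)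
    (hQi : iIndepFun Q P)
    (c : Fin K → ℝ) {t : ℝ} (ht0 : 0 ≤ t) (ht1 : t ≤ 1) :
    P {ω | t < |empNull (fun m => Q m ω) c - gNullG G0 c|} ≤
      ENNReal.ofReal (2 * Real.exp (-(M:ℝ)*t^2/8)) := by
  set A : Set (Fin K → ℝ) := {q | ∀ k, q k ≤ c k} with hA
  have hAmeas : MeasurableSet A := measSet_le c
  set Y : Fin M → Ω → ℝ := fun m ω => ind (∀ k, Q m ω k ≤ c k) with hY
  have hYind : ∀ m ω, Y m ω = A.indicator (fun _ => (1:ℝ)) (Q m ω) := by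
    intro m ω
    exact ind_eq_indicator A (Q m ω)
  have hmeas : ∀ m, Measurable (Y m) := by
    intro m
    have heq : Y m = fun ω => A.indicator (fun _ => (1:ℝ)) (Q m ω) := funext (hYind m)
    rw [heq]
    exact (measurable_const.indicator hAmeas).comp (hQm m)
  have h01 : ∀ m ω, Y m ω = 0 ∨ Y m ω = 1 := fun m ω => ind_zero_or_one _
  have hind : iIndepFun Y P := by
    have hcomp := hQi.comp (fun _ => A.indicator (fun _ => (1:ℝ)))
      (fun _ => measurable_const.indicator hAmeas)
    have heq : Y = fun m => (A.indicator (fun _ => (1:ℝ))) ∘ (Q m) := by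
      funext m ω; exact hYind m ω
    rw [heq]
    exact hcomp
  have hp : ∀ m, ∫ ω, Y m ω ∂P = gNullG G0 c := by
    intro m
    have heq : ∫ ω, Y m ω ∂P = ∫ ω, A.indicator (fun _ => (1:ℝ)) (Q m ω) ∂P :=
      integral_congr_ae (Filter.Eventually.of_forall fun ω => hYind m ω)
    rw [heq]
    have hmap := integral_map (hQm m).aemeasurable
      ((measurable_const.indicator hAmeas (f := fun _ : Fin K → ℝ => (1:ℝ)))).aestronglyMeasurable
      (φ := Q m) (μ := P)
    rw [← hmap, hQd m, integral_indicator_const _ hAmeas]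
    simp [gNullG, hA, Measure.real]
  have htwo := two_sided_dev hM Y hmeas h01 hind hp ht0 ht1
  exact htwo

lemma corner_dev_alt {M : ℕ} (hM : 1 ≤ M) (Ga : Measure (Fin K → ℝ)) [IsProbabilityMeasure Ga]
    (Qa : Fin M → Ω → Fin K → ℝ) (hQm : ∀ m, Measurable (Qa m))
    (hQd : ∀ m, P.map (Qa m) = Ga)
    (hQi : iIndepFun Qa P)
    (c : Fin K → ℝ) {t : ℝ} (ht0 : 0 ≤ t) (ht1 : t ≤ 1) :
    P {ω | t < |empAlt (fun m => Qa m ω) c - gAltG Ga c|} ≤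
      ENNReal.ofReal (2 * Real.exp (-(M:ℝ)*t^2/8)) := by
  set A : Set (Fin K → ℝ) := {q | ∀ k, q k < c k} with hA
  have hAmeas : MeasurableSet A := measSet_lt c
  set Y : Fin M → Ω → ℝ := fun m ω => ind (∀ k, Qa m ω k < c k) with hY
  have hYind : ∀ m ω, Y m ω = A.indicator (fun _ => (1:ℝ)) (Qa m ω) := by
    intro m ω
    exact ind_eq_indicator A (Qa m ω)
  have hmeas : ∀ m, Measurable (Y m) := by
    intro m
    have heq : Y m = fun ω => A.indicator (fun _ => (1:ℝ)) (Qa m ω) := funext (hYind m)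
    rw [heq]
    exact (measurable_const.indicator hAmeas).comp (hQm m)
  have h01 : ∀ m ω, Y m ω = 0 ∨ Y m ω = 1 := fun m ω => ind_zero_or_one _
  have hind : iIndepFun Y P := by
    have hcomp := hQi.comp (fun _ => A.indicator (fun _ => (1:ℝ)))
      (fun _ => measurable_const.indicator hAmeas)
    have heq : Y = fun m => (A.indicator (fun _ => (1:ℝ))) ∘ (Qa m) := by
      funext m ω; exact hYind m ω
    rw [heq]
    exact hcomp
  have hp : ∀ m, ∫ ω, Y m ω ∂P = gAltG Ga c := by
    intro m
    have heq : ∫ ω, Y m ω ∂P = ∫ ω, A.indicator (fun _ => (1:ℝ)) (Qa m ω) ∂P :=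
      integral_congr_ae (Filter.Eventually.of_forall fun ω => hYind m ω)
    rw [heq]
    have hmap := integral_map (hQm m).aemeasurable
      ((measurable_const.indicator hAmeas (f := fun _ : Fin K → ℝ => (1:ℝ)))).aestronglyMeasurable
      (φ := Qa m) (μ := P)
    rw [← hmap, hQd m, integral_indicator_const _ hAmeas]
    simp [gAltG, hA, Measure.real]
  have htwo := two_sided_dev hM Y hmeas h01 hind hp ht0 ht1
  exact htwo

end Corner

section Diff
variable {K : ℕ}

lemma gNull_diff (G0 : Measure (Fin K → ℝ)) [IsProbabilityMeasure G0]
    (aa bb : Fin K → ℝ) (h : ∀ i, aa i ≤ bb i) :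
    gNullG G0 bb ≤ gNullG G0 aa + ∑ i : Fin K, (G0 {q | aa i ≤ q i ∧ q i ≤ bb i}).toReal := by
  have hsub : {q : Fin K → ℝ | ∀ k, q k ≤ bb k} ⊆
      {q : Fin K → ℝ | ∀ k, q k ≤ aa k} ∪ ⋃ i : Fin K, {q : Fin K → ℝ | aa i ≤ q i ∧ q i ≤ bb i} := by
    intro q hq
    by_cases hall : ∀ k, q k ≤ aa k
    · exact Or.inl hall
    · push_neg at hall
      obtain ⟨i, hi⟩ := hall
      exact Or.inr (Set.mem_iUnion.mpr ⟨i, ⟨hi.le, hq i⟩⟩)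
  have h1 : G0 {q : Fin K → ℝ | ∀ k, q k ≤ bb k} ≤
      G0 {q : Fin K → ℝ | ∀ k, q k ≤ aa k} +
        ∑ i : Fin K, G0 {q : Fin K → ℝ | aa i ≤ q i ∧ q i ≤ bb i} := by
    calc G0 {q : Fin K → ℝ | ∀ k, q k ≤ bb k}
        ≤ G0 ({q : Fin K → ℝ | ∀ k, q k ≤ aa k} ∪
            ⋃ i : Fin K, {q : Fin K → ℝ | aa i ≤ q i ∧ q i ≤ bb i}) := measure_mono hsub
      _ ≤ G0 {q : Fin K → ℝ | ∀ k, q k ≤ aa k} +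
            G0 (⋃ i : Fin K, {q : Fin K → ℝ | aa i ≤ q i ∧ q i ≤ bb i}) := measure_union_le _ _
      _ ≤ _ := add_le_add le_rfl (measure_iUnion_fintype_le _ _)
  have hne : G0 {q : Fin K → ℝ | ∀ k, q k ≤ aa k} +
      ∑ i : Fin K, G0 {q : Fin K → ℝ | aa i ≤ q i ∧ q i ≤ bb i} ≠ ⊤ := by
    refine ENNReal.add_ne_top.mpr ⟨measure_ne_top _ _, ?_⟩
    exact (ENNReal.sum_lt_top.mpr (fun i _ => measure_lt_top _ _)).ne
  have := ENNReal.toReal_mono hne h1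
  rw [ENNReal.toReal_add (measure_ne_top _ _)
    (ENNReal.sum_lt_top.mpr (fun i _ => measure_lt_top _ _)).ne, ENNReal.toReal_sum
    (fun i _ => measure_ne_top _ _)] at this
  exact this

lemma gAlt_diff (Ga : Measure (Fin K → ℝ)) [IsProbabilityMeasure Ga]
    (aa bb : Fin K → ℝ) (h : ∀ i, aa i ≤ bb i) :
    gAltG Ga bb ≤ gAltG Ga aa + ∑ i : Fin K, (Ga {q | aa i ≤ q i ∧ q i ≤ bb i}).toReal := by
  have hsub : {q : Fin K → ℝ | ∀ k, q k < bb k} ⊆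
      {q : Fin K → ℝ | ∀ k, q k < aa k} ∪ ⋃ i : Fin K, {q : Fin K → ℝ | aa i ≤ q i ∧ q i ≤ bb i} := by
    intro q hq
    by_cases hall : ∀ k, q k < aa k
    · exact Or.inl hall
    · push_neg at hall
      obtain ⟨i, hi⟩ := hall
      exact Or.inr (Set.mem_iUnion.mpr ⟨i, ⟨hi, (hq i).le⟩⟩)
  have h1 : Ga {q : Fin K → ℝ | ∀ k, q k < bb k} ≤
      Ga {q : Fin K → ℝ | ∀ k, q k < aa k} +
        ∑ i : Fin K, Ga {q : Fin K → ℝ | aa i ≤ q i ∧ q i ≤ bb i} := by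
    calc Ga {q : Fin K → ℝ | ∀ k, q k < bb k}
        ≤ Ga ({q : Fin K → ℝ | ∀ k, q k < aa k} ∪
            ⋃ i : Fin K, {q : Fin K → ℝ | aa i ≤ q i ∧ q i ≤ bb i}) := measure_mono hsub
      _ ≤ Ga {q : Fin K → ℝ | ∀ k, q k < aa k} +
            Ga (⋃ i : Fin K, {q : Fin K → ℝ | aa i ≤ q i ∧ q i ≤ bb i}) := measure_union_le _ _
      _ ≤ _ := add_le_add le_rfl (measure_iUnion_fintype_le _ _)
  have hne : Ga {q : Fin K → ℝ | ∀ k, q k < aa k} +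
      ∑ i : Fin K, Ga {q : Fin K → ℝ | aa i ≤ q i ∧ q i ≤ bb i} ≠ ⊤ := by
    refine ENNReal.add_ne_top.mpr ⟨measure_ne_top _ _, ?_⟩
    exact (ENNReal.sum_lt_top.mpr (fun i _ => measure_lt_top _ _)).ne
  have := ENNReal.toReal_mono hne h1
  rw [ENNReal.toReal_add (measure_ne_top _ _)
    (ENNReal.sum_lt_top.mpr (fun i _ => measure_lt_top _ _)).ne, ENNReal.toReal_sum
    (fun i _ => measure_ne_top _ _)] at this
  exact this

end Diff

section Main
variable {K : ℕ}

lemma main_core (α β θlo θhi : ℝ) (hα : α ∈ Set.Ioo (0:ℝ) 1) (hβ : β ∈ Set.Ioo (0:ℝ) 1)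
    (hθ : θlo < θhi) (G0 Ga : Measure (Fin K → ℝ))
    [IsProbabilityMeasure G0] [IsProbabilityMeasure Ga]
    (hac0 : G0 ≪ (volume : Measure (Fin K → ℝ)))
    (haca : Ga ≪ (volume : Measure (Fin K → ℝ)))
    {Ω : Type*} [MeasurableSpace Ω] (P : Measure Ω) [IsProbabilityMeasure P]
    (η : ℝ) (hη : η ∈ Set.Ioo (0:ℝ) 1) (M : ℕ) (hM : 1 ≤ M)
    (Q Qa : Fin M → Ω → Fin K → ℝ)
    (hQm : ∀ m, Measurable (Q m)) (hQam : ∀ m, Measurable (Qa m))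
    (hQd : ∀ m, P.map (Q m) = G0) (hQad : ∀ m, P.map (Qa m) = Ga)
    (hindep : iIndepFun (Sum.elim Q Qa) P)
    (ε : ℝ)
    (hε : 3 * Real.sqrt (8*(Real.log (1/η) + ((K:ℝ)+1)*Real.log 4 + (K:ℝ)*Real.log M)/(M:ℝ))
       + 2*((K:ℝ)/(M:ℝ)) ≤ ε) :
    ENNReal.ofReal (1-η) ≤ P {ω |
      FeasG G0 Ga θlo θhi (α-ε) (β-ε) ⊆
        FeasMG (fun m => Q m ω) (fun m => Qa m ω) θlo θhi α β ∧
      FeasMG (fun m => Q m ω) (fun m => Qa m ω) θlo θhi α β ⊆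
        FeasG G0 Ga θlo θhi (α+ε) (β+ε)} := by
  classical
  obtain ⟨hη0, hη1⟩ := hη
  obtain ⟨hα0, hα1⟩ := hα
  obtain ⟨hβ0, hβ1⟩ := hβ
  have hM0 : (0:ℝ) < M := by exact_mod_cast hM
  have hL0 : 0 ≤ Real.log (1/η) := Real.log_nonneg ((le_div_iff₀ hη0).mpr (by linarith))
  have hlogM : 0 ≤ Real.log M := Real.log_nonneg (by exact_mod_cast hM)
  have hlog4 : 0 ≤ Real.log 4 := Real.log_nonneg (by norm_num)
  set S : ℝ := Real.log (1/η) + ((K:ℝ)+1)*Real.log 4 + (K:ℝ)*Real.log M with hSdef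
  have hS0 : 0 ≤ S := by
    have h1 : 0 ≤ ((K:ℝ)+1)*Real.log 4 := mul_nonneg (by positivity) hlog4
    have h2 : 0 ≤ (K:ℝ)*Real.log M := mul_nonneg (by positivity) hlogM
    rw [hSdef]; linarith
  set t : ℝ := Real.sqrt (8*S/(M:ℝ)) with htdef
  have ht0 : 0 ≤ t := Real.sqrt_nonneg _
  have ht2 : t^2 = 8*S/(M:ℝ) := Real.sq_sqrt (by positivity)
  have hKM : (0:ℝ) ≤ (K:ℝ)/(M:ℝ) := by positivity
  have hεt : 3*t + 2*((K:ℝ)/(M:ℝ)) ≤ ε := hε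
  by_cases ht1 : t ≤ 1
  swap
  · -- trivial case: t > 1 hence ε > 1
    push_neg at ht1
    have hεgt : 1 < ε := by nlinarith
    have huniv : {ω : Ω |
        FeasG G0 Ga θlo θhi (α-ε) (β-ε) ⊆
          FeasMG (fun m => Q m ω) (fun m => Qa m ω) θlo θhi α β ∧
        FeasMG (fun m => Q m ω) (fun m => Qa m ω) θlo θhi α β ⊆
          FeasG G0 Ga θlo θhi (α+ε) (β+ε)} = Set.univ :=
      Set.eq_univ_of_forall (fun ω =>
        det_trivial G0 Ga (fun m => Q m ω) (fun m => Qa m ω) θlo θhi α β ε hα0 hβ0 hβ1 hεgt)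
    rw [huniv, measure_univ]
    exact ENNReal.ofReal_le_one.mpr (by linarith)
  -- main case
  have hgrid := fun i : Fin K => exists_grid G0 Ga hac0 haca i hM θlo θhi hθ.le
  choose T hTlo hThi hTcard hTbr using hgrid
  set corners : Finset (Fin K → ℝ) := Fintype.piFinset T with hcorners
  set E : Set Ω := {ω | ∀ c : Fin K → ℝ, (∀ i, c i ∈ T i) →
    |empNull (fun m => Q m ω) c - gNullG G0 c| ≤ t ∧
    |empAlt (fun m => Qa m ω) c - gAltG Ga c| ≤ t} with hE
  have hEsub : E ⊆ {ω |
      FeasG G0 Ga θlo θhi (α-ε) (β-ε) ⊆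
        FeasMG (fun m => Q m ω) (fun m => Qa m ω) θlo θhi α β ∧
      FeasMG (fun m => Q m ω) (fun m => Qa m ω) θlo θhi α β ⊆
        FeasG G0 Ga θlo θhi (α+ε) (β+ε)} := by
    intro ω hω
    have hωE : ∀ c : Fin K → ℝ, (∀ i, c i ∈ T i) →
        |empNull (fun m => Q m ω) c - gNullG G0 c| ≤ t ∧
        |empAlt (fun m => Qa m ω) c - gAltG Ga c| ≤ t := hω
    have hbr : ∀ θ : Fin K → ℝ, inBox θlo θhi θ → ∃ aa bb : Fin K → ℝ,
        (∀ i, aa i ∈ T i) ∧ (∀ i, bb i ∈ T i) ∧ (∀ i, aa i ≤ θ i) ∧ (∀ i, θ i ≤ bb i) ∧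
        gNullG G0 bb ≤ gNullG G0 aa + (K:ℝ)/(M:ℝ) ∧
        gAltG Ga bb ≤ gAltG Ga aa + (K:ℝ)/(M:ℝ) := by
      intro θ hbox
      have hx := fun i => hTbr i (θ i) (hbox i)
      choose aa haaT bb hbbT hale hble hs0 hsa using hx
      have haabb : ∀ i, aa i ≤ bb i := fun i => le_trans (hale i) (hble i)
      have hsum : ∑ _i : Fin K, 1/(M:ℝ) = (K:ℝ)/(M:ℝ) := by
        rw [Finset.sum_const, Finset.card_univ, Fintype.card_fin, nsmul_eq_mul]
        ring
      refine ⟨aa, bb, haaT, hbbT, hale, hble, ?_, ?_⟩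
      · refine le_trans (gNull_diff G0 aa bb haabb) ?_
        have hb : ∑ i : Fin K, (G0 {q | aa i ≤ q i ∧ q i ≤ bb i}).toReal ≤
            ∑ _i : Fin K, 1/(M:ℝ) := Finset.sum_le_sum (fun i _ => hs0 i)
        rw [hsum] at hb
        linarith
      · refine le_trans (gAlt_diff Ga aa bb haabb) ?_
        have hb : ∑ i : Fin K, (Ga {q | aa i ≤ q i ∧ q i ≤ bb i}).toReal ≤
            ∑ _i : Fin K, 1/(M:ℝ) := Finset.sum_le_sum (fun i _ => hsa i)
        rw [hsum] at hb
        linarith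
    have hbr' : ∀ θ : Fin K → ℝ, inBox θlo θhi θ → ∃ aa bb : Fin K → ℝ,
        (∀ i, aa i ∈ T i) ∧ (∀ i, bb i ∈ T i) ∧
        (∀ i, aa i ≤ θ i) ∧ (∀ i, θ i ≤ bb i) ∧
        gNullG G0 bb ≤ gNullG G0 aa + (K:ℝ)/(M:ℝ) ∧
        gAltG Ga bb ≤ gAltG Ga aa + (K:ℝ)/(M:ℝ) := hbr
    exact det_incl G0 Ga (fun m => Q m ω) (fun m => Qa m ω) θlo θhi α β t ((K:ℝ)/(M:ℝ)) ε
      ht0 hKM hεt (fun c => ∀ i, c i ∈ T i)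
      (fun θ hbox => by
        obtain ⟨aa, bb, h1, h2, h3, h4, h5, h6⟩ := hbr' θ hbox
        exact ⟨aa, bb, h1, h2, h3, h4, h5, h6⟩)
      (fun c hc => (hωE c hc).1) (fun c hc => (hωE c hc).2)
  have hQi : iIndepFun Q P := iIndepFun_inl hindep
  have hQai : iIndepFun Qa P := iIndepFun_inr hindep
  set Bad : Set Ω := ⋃ c ∈ corners,
      ({ω | t < |empNull (fun m => Q m ω) c - gNullG G0 c|} ∪
       {ω | t < |empAlt (fun m => Qa m ω) c - gAltG Ga c|}) with hBad
  have hcover : (Set.univ : Set Ω) ⊆ E ∪ Bad := by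
    intro ω _
    by_cases hωE : ω ∈ E
    · exact Or.inl hωE
    · right
      rw [hE] at hωE
      simp only [Set.mem_setOf_eq, not_forall] at hωE
      obtain ⟨c, hc, hnot⟩ := hωE
      rw [hBad]
      refine Set.mem_biUnion (show c ∈ corners by rw [hcorners]; exact Fintype.mem_piFinset.mpr hc) ?_
      rcases not_and_or.mp hnot with h|h
      · exact Or.inl (not_le.mp h)
      · exact Or.inr (not_le.mp h)
  have hbadbound : P Bad ≤ ENNReal.ofReal η := by
    rw [hBad]
    refine le_trans (measure_biUnion_finset_le corners _) ?_
    have heach : ∀ c ∈ corners,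
        P ({ω | t < |empNull (fun m => Q m ω) c - gNullG G0 c|} ∪
           {ω | t < |empAlt (fun m => Qa m ω) c - gAltG Ga c|}) ≤
        ENNReal.ofReal (4*Real.exp (-(M:ℝ)*t^2/8)) := by
      intro c _
      refine le_trans (measure_union_le _ _) ?_
      have h1 := corner_dev_null hM G0 Q hQm hQd hQi c ht0 ht1
      have h2 := corner_dev_alt hM Ga Qa hQam hQad hQai c ht0 ht1
      calc P {ω | t < |empNull (fun m => Q m ω) c - gNullG G0 c|} +
            P {ω | t < |empAlt (fun m => Qa m ω) c - gAltG Ga c|}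
          ≤ ENNReal.ofReal (2*Real.exp (-(M:ℝ)*t^2/8)) +
            ENNReal.ofReal (2*Real.exp (-(M:ℝ)*t^2/8)) := add_le_add h1 h2
        _ = ENNReal.ofReal (4*Real.exp (-(M:ℝ)*t^2/8)) := by
            rw [← ENNReal.ofReal_add (by positivity) (by positivity)]
            ring_nf
    refine le_trans (Finset.sum_le_sum heach) ?_
    rw [Finset.sum_const, nsmul_eq_mul]
    have hcard1 : corners.card ≤ (2*M+2)^K := by
      rw [hcorners, Fintype.card_piFinset]
      calc ∏ i : Fin K, (T i).card ≤ ∏ _i : Fin K, (2*M+2) :=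
          Finset.prod_le_prod' (fun i _ => hTcard i)
        _ = (2*M+2)^K := by rw [Finset.prod_const, Finset.card_univ, Fintype.card_fin]
    have hcard2 : (2*M+2)^K ≤ (4*M)^K := Nat.pow_le_pow_left (by omega) K
    have hexp : (((4*M)^K : ℕ) : ℝ) * (4*Real.exp (-(M:ℝ)*t^2/8)) ≤ η := by
      have hMt : -(M:ℝ)*t^2/8 = -S := by
        rw [ht2]; field_simp
      rw [hMt]
      have hexpS : Real.exp (-S) = η / (4^(K+1) * (M:ℝ)^K) := by
        rw [hSdef, neg_add, neg_add, Real.exp_add, Real.exp_add]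
        have e1 : Real.exp (-Real.log (1/η)) = η := by
          rw [Real.exp_neg, Real.exp_log (by positivity)]
          field_simp
        have e2 : Real.exp (-(((K:ℝ)+1)*Real.log 4)) = ((4:ℝ)^(K+1))⁻¹ := by
          rw [Real.exp_neg]
          congr 1
          rw [show ((K:ℝ)+1) = ((K+1 : ℕ):ℝ) by push_cast; ring, Real.exp_nat_mul,
            Real.exp_log (by norm_num)]
        have e3 : Real.exp (-((K:ℝ)*Real.log M)) = ((M:ℝ)^K)⁻¹ := by
          rw [Real.exp_neg]
          congr 1
          rw [Real.exp_nat_mul, Real.exp_log hM0]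
        rw [e1, e2, e3]
        field_simp
      rw [hexpS]
      have h4M : (((4*M)^K : ℕ) : ℝ) = 4^K * (M:ℝ)^K := by push_cast; rw [mul_pow]
      rw [h4M]
      have hiden : (4:ℝ)^K * (M:ℝ)^K * (4 * (η / (4^(K+1) * (M:ℝ)^K))) = η := by
        field_simp
        ring
      linarith [hiden.le]
    calc (corners.card : ℝ≥0∞) * ENNReal.ofReal (4*Real.exp (-(M:ℝ)*t^2/8))
        ≤ (((4*M)^K : ℕ) : ℝ≥0∞) * ENNReal.ofReal (4*Real.exp (-(M:ℝ)*t^2/8)) := by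
          exact mul_le_mul_left (Nat.cast_le.mpr (le_trans hcard1 hcard2)) _
      _ = ENNReal.ofReal ((((4*M)^K : ℕ) : ℝ) * (4*Real.exp (-(M:ℝ)*t^2/8))) := by
          rw [← ENNReal.ofReal_natCast ((4*M)^K), ← ENNReal.ofReal_mul (by positivity)]
      _ ≤ ENNReal.ofReal η := ENNReal.ofReal_le_ofReal hexp
  have h1 : (1:ℝ≥0∞) ≤ P E + P Bad := by
    calc (1:ℝ≥0∞) = P Set.univ := measure_univ.symm
      _ ≤ P (E ∪ Bad) := measure_mono hcover
      _ ≤ P E + P Bad := measure_union_le _ _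
  have h2 : ENNReal.ofReal (1-η) ≤ P E := by
    have h3 : ENNReal.ofReal (1-η) = 1 - ENNReal.ofReal η := by
      rw [ENNReal.ofReal_sub 1 hη0.le, ENNReal.ofReal_one]
    rw [h3]
    refine tsub_le_iff_right.mpr ?_
    calc (1:ℝ≥0∞) ≤ P E + P Bad := h1
      _ ≤ P E + ENNReal.ofReal η := add_le_add le_rfl hbadbound
  exact le_trans h2 (measure_mono hEsub)

end Main

/-- Proposition `convergence-generalization`(i). Let `G₀`, `G_a`
be Borel probability measures on `ℝ^K`, absolutely continuous with densities
essentially bounded on `C`. There are nonnegative constants `c₁, c₂, c₃`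
(depending only on `K`, the stage sizes, the box and the density bounds, not on
`M` or `η`) such that for all `η ∈ (0,1)` and `M ≥ 1`, with probability at least
`1−η`, `Θ_G(α−ε_G, β−ε_G) ⊆ Θ^G_M(α,β) ⊆ Θ_G(α+ε_G, β+ε_G)` with
`ε_G(η,M) = √((c₁ log(1/η) + c₂ log M + c₃)/M)`. -/
theorem general_feasible_set_inclusion
    {K : ℕ} (hK : 0 < K) (n : Fin K → ℕ)
    (α β θlo θhi : ℝ) (hα : α ∈ Set.Ioo (0 : ℝ) 1) (hβ : β ∈ Set.Ioo (0 : ℝ) 1)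
    (hθ : θlo < θhi)
    (G0 Ga : Measure (Fin K → ℝ))
    [IsProbabilityMeasure G0] [IsProbabilityMeasure Ga]
    (hac0 : G0 ≪ (volume : Measure (Fin K → ℝ)))
    (haca : Ga ≪ (volume : Measure (Fin K → ℝ)))
    (B0 Ba : ℝ)
    (hB0 : ∀ᵐ q ∂(volume : Measure (Fin K → ℝ)),
      inBox θlo θhi q → G0.rnDeriv volume q ≤ ENNReal.ofReal B0)
    (hBa : ∀ᵐ q ∂(volume : Measure (Fin K → ℝ)),
      inBox θlo θhi q → Ga.rnDeriv volume q ≤ ENNReal.ofReal Ba)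
    {Ω : Type*} [MeasurableSpace Ω] (P : Measure Ω) [IsProbabilityMeasure P] :
    ∃ c1 c2 c3 : ℝ, 0 ≤ c1 ∧ 0 ≤ c2 ∧ 0 ≤ c3 ∧
      ∀ η : ℝ, η ∈ Set.Ioo (0 : ℝ) 1 → ∀ M : ℕ, 1 ≤ M →
        ∀ Q Qa : Fin M → Ω → Fin K → ℝ,
          (∀ m, Measurable (Q m)) → (∀ m, Measurable (Qa m)) →
          (∀ m, P.map (Q m) = G0) →
          (∀ m, P.map (Qa m) = Ga) →
          iIndepFun (Sum.elim Q Qa) P →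
          ENNReal.ofReal (1 - η) ≤
            P {ω |
              FeasG G0 Ga θlo θhi
                  (α - Real.sqrt ((c1 * Real.log (1 / η) + c2 * Real.log M + c3) / M))
                  (β - Real.sqrt ((c1 * Real.log (1 / η) + c2 * Real.log M + c3) / M)) ⊆
                FeasMG (fun m => Q m ω) (fun m => Qa m ω) θlo θhi α β ∧
              FeasMG (fun m => Q m ω) (fun m => Qa m ω) θlo θhi α β ⊆
                FeasG G0 Ga θlo θhi
                  (α + Real.sqrt ((c1 * Real.log (1 / η) + c2 * Real.log M + c3) / M))
                  (β + Real.sqrt ((c1 * Real.log (1 / η) + c2 * Real.log M + c3) / M))} := by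
  classical
  have hlog4 : 0 ≤ Real.log 4 := Real.log_nonneg (by norm_num)
  refine ⟨144, 144*(K:ℝ), 144*((K:ℝ)+1)*Real.log 4 + 8*(K:ℝ)^2, by norm_num, by positivity,
    ?_, ?_⟩
  · have h1 : (0:ℝ) ≤ 144*((K:ℝ)+1)*Real.log 4 := mul_nonneg (by positivity) hlog4
    nlinarith [sq_nonneg ((K:ℝ))]
  · intro η hη M hM Q Qa hQm hQam hQd hQad hindep
    refine main_core α β θlo θhi hα hβ hθ G0 Ga hac0 haca P η hη M hM Q Qa hQm hQam hQd hQad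
      hindep _ ?_
    obtain ⟨hη0, hη1⟩ := hη
    have hM0 : (0:ℝ) < M := by exact_mod_cast hM
    have hM1 : (1:ℝ) ≤ M := by exact_mod_cast hM
    have hL0 : 0 ≤ Real.log (1/η) := Real.log_nonneg ((le_div_iff₀ hη0).mpr (by linarith))
    have hlogM : 0 ≤ Real.log (M:ℝ) := Real.log_nonneg hM1
    set L := Real.log (1/η) with hLdef
    set lM := Real.log (M:ℝ) with hlMdef
    set S : ℝ := L + ((K:ℝ)+1)*Real.log 4 + (K:ℝ)*lM with hS
    have hS0 : 0 ≤ S := by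
      have h1 : 0 ≤ ((K:ℝ)+1)*Real.log 4 := mul_nonneg (by positivity) hlog4
      have h2 : 0 ≤ (K:ℝ)*lM := mul_nonneg (by positivity) hlogM
      rw [hS]; linarith
    set u := Real.sqrt (8*S/(M:ℝ)) with hu
    have hu0 : 0 ≤ u := Real.sqrt_nonneg _
    have hu2 : u^2 = 8*S/(M:ℝ) := Real.sq_sqrt (by positivity)
    have hv0 : 0 ≤ 3*u + 2*((K:ℝ)/(M:ℝ)) := by positivity
    have harg : (144 * L + 144*(K:ℝ)*lM + (144*((K:ℝ)+1)*Real.log 4 + 8*(K:ℝ)^2)) / (M:ℝ)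
        = 18*(8*S/(M:ℝ)) + 8*(K:ℝ)^2/(M:ℝ) := by
      rw [hS]; field_simp; ring
    have hKM2 : ((K:ℝ)/(M:ℝ))^2 ≤ (K:ℝ)^2/(M:ℝ) := by
      rw [div_pow, div_le_div_iff₀ (by positivity) hM0]
      have hfac := mul_nonneg (mul_nonneg (sq_nonneg ((K:ℝ))) hM0.le) (sub_nonneg.mpr hM1)
      nlinarith [hfac]
    have hval : (3*u + 2*((K:ℝ)/(M:ℝ)))^2 ≤ 18*(8*S/(M:ℝ)) + 8*(K:ℝ)^2/(M:ℝ) := by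
      have e1 : (3*u + 2*((K:ℝ)/(M:ℝ)))^2 ≤ 18*u^2 + 8*((K:ℝ)/(M:ℝ))^2 := by
        nlinarith [sq_nonneg (3*u - 2*((K:ℝ)/(M:ℝ)))]
      have e2 : 18*u^2 = 18*(8*S/(M:ℝ)) := by rw [hu2]
      have e3 : 8*((K:ℝ)/(M:ℝ))^2 ≤ 8*((K:ℝ)^2/(M:ℝ)) := by linarith [hKM2]
      have e4 : 8*((K:ℝ)^2/(M:ℝ)) = 8*(K:ℝ)^2/(M:ℝ) := by ring
      linarith
    calc 3*u + 2*((K:ℝ)/(M:ℝ))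
        = Real.sqrt ((3*u + 2*((K:ℝ)/(M:ℝ)))^2) := (Real.sqrt_sq hv0).symm
      _ ≤ Real.sqrt ((144 * L + 144*(K:ℝ)*lM + (144*((K:ℝ)+1)*Real.log 4 + 8*(K:ℝ)^2)) / (M:ℝ)) := by
          refine Real.sqrt_le_sqrt ?_
          rw [harg]
          exact hval
end
end

section
/- Let δ ∈ ℝ with δ ≠ 0, let n₀ ≥ 2 be an integer, let U be a random variable with the chi-squared distribution with n₀ − 1 degrees of freedom, and set δ̂ = δ · √((n₀−1)/U). Then for every η ∈ (0,1), if n₀ ≥ 64 log(4/η) + 1, with probability at least 1−η: |δ − δ̂| ≤ 2|δ| · ( 2√(log(4/η)/(n₀−1)) + 2 log(4/η)/(n₀−1) ). -/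
open MeasureTheory ProbabilityTheory Real Set
open scoped ENNReal

noncomputable section

/-- The chi-squared distribution with `m` degrees of freedom, i.e. the Gamma
distribution with shape `m/2` and rate `1/2`. -/
def chiSqMeasure (m : ℝ) : Measure ℝ := gammaMeasure (m / 2) (1 / 2)

lemma aux_integrableOn {a c : ℝ} (ha : 0 < a) (hc : 0 < c) :
    IntegrableOn (fun x : ℝ => x ^ (a - 1) * Real.exp (-(c * x))) (Ioi 0) := by
  simpa [Real.rpow_one, neg_mul] using
    integrableOn_rpow_mul_exp_neg_mul_rpow (s := a - 1) (p := 1) (b := c)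
      (by linarith) zero_lt_one hc

lemma gamma_exp_aux {a r t : ℝ} (ha : 0 < a) (hr : 0 < r) (ht : t < r) :
    Integrable (fun x => gammaPDFReal a r x * Real.exp (t * x)) ∧
    ∫ x, gammaPDFReal a r x * Real.exp (t * x) = (r / (r - t)) ^ a := by
  have hrt : 0 < r - t := by linarith
  set g : ℝ → ℝ := fun x => gammaPDFReal a r x * Real.exp (t * x) with hg
  have hind : g = (Set.Ici (0:ℝ)).indicator g := by
    funext x
    by_cases hx : (0:ℝ) ≤ x
    · simp [Set.indicator_apply, hx]
    · simp [Set.indicator_apply, hx, hg, gammaPDFReal]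
  have heq : ∀ x ∈ Ioi (0:ℝ),
      g x = (r ^ a / Real.Gamma a) * (x ^ (a - 1) * Real.exp (-((r - t) * x))) := by
    intro x hx
    have hx0 : (0:ℝ) ≤ x := le_of_lt hx
    have hexp : Real.exp (-(r * x)) * Real.exp (t * x) = Real.exp (-((r - t) * x)) := by
      rw [← Real.exp_add]; ring_nf
    simp only [hg, gammaPDFReal, if_pos hx0]
    rw [mul_assoc, mul_assoc, hexp]
  have hIoi : IntegrableOn g (Ioi 0) := by
    apply (IntegrableOn.congr_fun ?_ (fun x hx => (heq x hx).symm) measurableSet_Ioi)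
    exact (aux_integrableOn ha hrt).const_mul _
  have hint : Integrable g := by
    rw [hind]
    rw [integrable_indicator_iff measurableSet_Ici]
    rw [integrableOn_Ici_iff_integrableOn_Ioi]
    exact hIoi
  refine ⟨hint, ?_⟩
  calc ∫ x, g x = ∫ x in Ici (0:ℝ), g x := by
        conv_lhs => rw [hind]
        rw [integral_indicator measurableSet_Ici]
    _ = ∫ x in Ioi (0:ℝ), g x := integral_Ici_eq_integral_Ioi
    _ = ∫ x in Ioi (0:ℝ), (r ^ a / Real.Gamma a) * (x ^ (a - 1) * Real.exp (-((r - t) * x))) :=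
        setIntegral_congr_fun measurableSet_Ioi heq
    _ = (r ^ a / Real.Gamma a) * ((1 / (r - t)) ^ a * Real.Gamma a) := by
        rw [integral_const_mul, integral_rpow_mul_exp_neg_mul_Ioi ha hrt]
    _ = (r / (r - t)) ^ a := by
        have hΓ : Real.Gamma a ≠ 0 := (Real.Gamma_pos_of_pos ha).ne'
        rw [Real.div_rpow hr.le hrt.le, one_div, Real.inv_rpow hrt.le]
        field_simp

lemma mgf_gamma_law {Ω : Type*} [MeasurableSpace Ω] (P : Measure Ω) [IsProbabilityMeasure P]
    (U : Ω → ℝ) (hU : Measurable U) {a r t : ℝ} (ha : 0 < a) (hr : 0 < r) (ht : t < r)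
    (hlaw : P.map U = gammaMeasure a r) :
    Integrable (fun ω => Real.exp (t * U ω)) P ∧ mgf U P t = (r / (r - t)) ^ a := by
  obtain ⟨hint0, hval0⟩ := gamma_exp_aux ha hr ht
  have hf_meas : Measurable (fun x => (gammaPDFReal a r x).toNNReal) :=
    (measurable_gammaPDFReal a r).real_toNNReal
  have hpdf : gammaMeasure a r
      = (volume : Measure ℝ).withDensity (fun x => ((gammaPDFReal a r x).toNNReal : ℝ≥0∞)) := rfl
  have hsmul : (fun x => (gammaPDFReal a r x).toNNReal • Real.exp (t * x))
      = fun x => gammaPDFReal a r x * Real.exp (t * x) := by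
    funext x
    rw [NNReal.smul_def, Real.coe_toNNReal _ (gammaPDFReal_nonneg ha hr x), smul_eq_mul]
  have hintG : Integrable (fun x => Real.exp (t * x)) (gammaMeasure a r) := by
    rw [hpdf, integrable_withDensity_iff_integrable_smul hf_meas]
    rw [hsmul]; exact hint0
  have hvalG : ∫ x, Real.exp (t * x) ∂(gammaMeasure a r) = (r / (r - t)) ^ a := by
    rw [hpdf, integral_withDensity_eq_integral_smul hf_meas, hsmul, hval0]
  have hgm : AEStronglyMeasurable (fun x => Real.exp (t * x)) (P.map U) :=
    (Real.continuous_exp.comp (continuous_const.mul continuous_id)).aestronglyMeasurable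
  constructor
  · exact (integrable_map_measure hgm hU.aemeasurable).1 (by rw [hlaw]; exact hintG)
  · rw [mgf, ← integral_map hU.aemeasurable hgm, hlaw, hvalG]

lemma log_one_add_le {t : ℝ} (h0 : 0 ≤ t) (h1 : t ≤ 1) :
    Real.log (1 + t) ≤ t - t ^ 2 / 8 := by
  have hpos : (0:ℝ) < 1 + t := by linarith
  set w := Real.sqrt (1 + t) with hw
  have hw2 : w ^ 2 = 1 + t := Real.sq_sqrt hpos.le
  have hw0 : 0 < w := Real.sqrt_pos.2 hpos
  have hlog : Real.log (1 + t) = 2 * Real.log w := by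
    rw [hw, Real.log_sqrt hpos.le]; ring
  have h2 : Real.log w ≤ w - 1 := Real.log_le_sub_one_of_pos hw0
  have hwle : w ≤ 3 / 2 := by nlinarith
  nlinarith [sq_nonneg (w - 1)]

lemma log_one_sub_le {s : ℝ} (h0 : 0 ≤ s) (h1 : s ≤ 1 / 2) :
    Real.log (1 - s) ≤ -s - s ^ 2 / 4 := by
  have hpos : (0:ℝ) < 1 - s := by linarith
  set w := Real.sqrt (1 - s) with hw
  have hw2 : w ^ 2 = 1 - s := Real.sq_sqrt hpos.le
  have hw0 : 0 < w := Real.sqrt_pos.2 hpos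
  have hlog : Real.log (1 - s) = 2 * Real.log w := by
    rw [hw, Real.log_sqrt hpos.le]; ring
  have h2 : Real.log w ≤ w - 1 := Real.log_le_sub_one_of_pos hw0
  have hwle : w ≤ 1 := by nlinarith
  nlinarith [sq_nonneg (w - 1)]

set_option maxHeartbeats 1600000 in
/-- Lemma `pilot-sample-convergence`, key step. Let `δ ≠ 0`,
`U ~ χ²_{n₀−1}`, and `δ̂ = δ √((n₀−1)/U)`. Then for every `η ∈ (0,1)`, if
`n₀ ≥ 64 log(4/η) + 1`, with probability at least `1−η`,
`|δ − δ̂| ≤ 2|δ| (2√(log(4/η)/(n₀−1)) + 2 log(4/η)/(n₀−1))`. -/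
theorem deltaHat_concentration
    (δ : ℝ) (hδ : δ ≠ 0) (n0 : ℕ) (hn0 : 2 ≤ n0)
    {Ω : Type*} [MeasurableSpace Ω] (P : Measure Ω) [IsProbabilityMeasure P]
    (U : Ω → ℝ) (hU : Measurable U)
    (hUlaw : P.map U = chiSqMeasure ((n0 : ℝ) - 1))
    (η : ℝ) (hη : η ∈ Set.Ioo (0 : ℝ) 1)
    (hbig : 64 * Real.log (4 / η) + 1 ≤ (n0 : ℝ)) :
    ENNReal.ofReal (1 - η) ≤
      P {ω |
        |δ - δ * Real.sqrt (((n0 : ℝ) - 1) / U ω)| ≤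
          2 * |δ| *
            (2 * Real.sqrt (Real.log (4 / η) / ((n0 : ℝ) - 1)) +
              2 * Real.log (4 / η) / ((n0 : ℝ) - 1)) } := by
  obtain ⟨hη0, hη1⟩ := hη
  set m : ℝ := (n0 : ℝ) - 1 with hm
  have hn0' : (2:ℝ) ≤ (n0 : ℝ) := by exact_mod_cast hn0
  have hm1 : 1 ≤ m := by simp only [hm]; linarith
  have hm0 : 0 < m := by linarith
  set L : ℝ := Real.log (4 / η) with hL
  have hL0 : 0 < L := Real.log_pos (by rw [lt_div_iff₀ hη0]; linarith)
  have hmL : 64 * L ≤ m := by simp only [hm]; linarith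
  set ε : ℝ := Real.sqrt (L / m) with hε
  have hLm0 : 0 < L / m := div_pos hL0 hm0
  have hε0 : 0 < ε := Real.sqrt_pos.2 hLm0
  have hε2 : ε ^ 2 = L / m := Real.sq_sqrt hLm0.le
  have hε8 : ε ≤ 1 / 8 := by
    have h64 : ε ^ 2 ≤ 1 / 64 := by
      rw [hε2, div_le_div_iff₀ hm0 (by norm_num)]; linarith
    nlinarith
  have hLε : L = m * ε ^ 2 := by rw [hε2]; field_simp
  -- the two thresholds
  set q₁ : ℝ := m * (1 - 4 * ε) with hq₁
  set q₂ : ℝ := m * (1 + 8 * ε) with hq₂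
  have hq₁0 : 0 < q₁ := by rw [hq₁]; nlinarith
  have hq₂0 : 0 < q₂ := by rw [hq₂]; nlinarith
  have hlaw' : P.map U = gammaMeasure (m / 2) (1 / 2) := hUlaw
  have ha2 : 0 < m / 2 := by linarith
  have hlog2 : (0:ℝ) < Real.log 2 := Real.log_pos (by norm_num)
  have hlogη2 : Real.log (η / 2) + L = Real.log 2 := by
    rw [hL, ← Real.log_mul (by positivity) (by positivity)]
    rw [show η / 2 * (4 / η) = 2 by first | (field_simp; ring) | field_simp]
  -- upper tail
  have tail_up : (P {ω | q₂ ≤ U ω}).toReal ≤ η / 2 := by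
    set s : ℝ := 8 * ε / (2 * (1 + 8 * ε)) with hs
    have h1p : (0:ℝ) < 1 + 8 * ε := by linarith
    have hs0 : 0 ≤ s := by positivity
    have hsr : s < 1 / 2 := by
      rw [hs, div_lt_iff₀ (by positivity)]; nlinarith
    obtain ⟨hint, hmgf⟩ := mgf_gamma_law P U hU ha2 (by norm_num) hsr hlaw'
    have h2s : (0:ℝ) < 1 / 2 - s := by linarith
    have hdiv : (1:ℝ) / 2 / (1 / 2 - s) = 1 + 8 * ε := by
      rw [div_eq_iff h2s.ne', hs]
      first | (field_simp; ring) | field_simp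
    have hch := measure_ge_le_exp_mul_mgf (X := U) (μ := P) (t := s) q₂ hs0 hint
    rw [hmgf, hdiv] at hch
    refine hch.trans ?_
    rw [Real.rpow_def_of_pos h1p, ← Real.exp_add,
      show η / 2 = Real.exp (Real.log (η / 2)) from (Real.exp_log (by positivity)).symm]
    apply Real.exp_le_exp.2
    have hlog8 : Real.log (1 + 8 * ε) ≤ 8 * ε - (8 * ε) ^ 2 / 8 :=
      log_one_add_le (by positivity) (by linarith)
    have hsq : -s * q₂ = -(4 * ε * m) := by
      rw [hs, hq₂]; first | (field_simp; ring) | field_simp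
    rw [hsq]
    have : m / 2 * Real.log (1 + 8 * ε) ≤ m / 2 * (8 * ε - (8 * ε) ^ 2 / 8) := by
      apply mul_le_mul_of_nonneg_left hlog8 (by linarith)
    nlinarith [hlogη2, hlog2, hL0, hLε]
  -- lower tail
  have tail_lo : (P {ω | U ω ≤ q₁}).toReal ≤ η / 2 := by
    set s : ℝ := 4 * ε / (2 * (1 - 4 * ε)) with hs
    have h1p : (0:ℝ) < 1 - 4 * ε := by linarith
    have hs0 : 0 ≤ s := by positivity
    have hsr : -s < 1 / 2 := by
      have : 0 ≤ s := hs0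
      linarith
    obtain ⟨hint, hmgf⟩ := mgf_gamma_law P U hU ha2 (by norm_num) hsr hlaw'
    have h2s : (0:ℝ) < 1 / 2 - -s := by linarith
    have hdiv : (1:ℝ) / 2 / (1 / 2 - -s) = 1 - 4 * ε := by
      rw [div_eq_iff h2s.ne', hs]
      first | (field_simp; ring) | field_simp
    have hch := measure_le_le_exp_mul_mgf (X := U) (μ := P) (t := -s) q₁ (by linarith) hint
    rw [hmgf, hdiv] at hch
    refine hch.trans ?_
    rw [Real.rpow_def_of_pos h1p, ← Real.exp_add,
      show η / 2 = Real.exp (Real.log (η / 2)) from (Real.exp_log (by positivity)).symm]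
    apply Real.exp_le_exp.2
    have hlog4 : Real.log (1 - 4 * ε) ≤ -(4 * ε) - (4 * ε) ^ 2 / 4 :=
      log_one_sub_le (by positivity) (by linarith)
    have hsq : -(-s) * q₁ = 2 * ε * m := by
      rw [hs, hq₁]; first | (field_simp; ring) | field_simp
    rw [hsq]
    have : m / 2 * Real.log (1 - 4 * ε) ≤ m / 2 * (-(4 * ε) - (4 * ε) ^ 2 / 4) := by
      apply mul_le_mul_of_nonneg_left hlog4 (by linarith)
    nlinarith [hlogη2, hlog2, hL0, hLε]
  -- deterministic inclusion
  have det : ∀ ω, q₁ ≤ U ω → U ω ≤ q₂ →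
      |δ - δ * Real.sqrt (m / U ω)| ≤ 2 * |δ| * (2 * ε + 2 * L / m) := by
    intro ω h1 h2
    have hx : 0 < U ω := lt_of_lt_of_le hq₁0 h1
    have he2 : ε ^ 2 ≤ ε / 8 := by nlinarith
    have he3 : ε ^ 3 ≤ ε / 64 := by nlinarith
    have he4 : ε ^ 4 ≤ ε / 512 := by nlinarith
    have he5 : ε ^ 5 ≤ ε / 4096 := by nlinarith
    set y : ℝ := Real.sqrt (m / U ω) with hy
    have hy0 : 0 ≤ y := Real.sqrt_nonneg _
    have h1p : (0:ℝ) < 1 - 4 * ε := by linarith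
    have hyub : y ≤ 1 + (4 * ε + 4 * ε ^ 2) := by
      rw [hy, show 1 + (4 * ε + 4 * ε ^ 2) = Real.sqrt ((1 + (4 * ε + 4 * ε ^ 2)) ^ 2) from
        (Real.sqrt_sq (by positivity)).symm]
      apply Real.sqrt_le_sqrt
      have hstep : m / U ω ≤ m / q₁ := div_le_div_of_nonneg_left hm0.le hq₁0 h1
      have hq₁v : m / q₁ = 1 / (1 - 4 * ε) := by
        rw [hq₁]; field_simp
      rw [hq₁v] at hstep
      refine hstep.trans ?_
      rw [div_le_iff₀ h1p]; nlinarith [he2, he3, he4, he5]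
    have hylb : 1 - 4 * ε ≤ y := by
      rw [hy, show (1 - 4 * ε) = Real.sqrt ((1 - 4 * ε) ^ 2) from
        (Real.sqrt_sq h1p.le).symm]
      apply Real.sqrt_le_sqrt
      have hstep : m / q₂ ≤ m / U ω := div_le_div_of_nonneg_left hm0.le hx h2
      have hq₂v : m / q₂ = 1 / (1 + 8 * ε) := by
        rw [hq₂]; field_simp
      rw [hq₂v] at hstep
      refine le_trans ?_ hstep
      rw [le_div_iff₀ (by positivity)]; nlinarith [he2, he3, he4, he5]
    have habs : |1 - y| ≤ 4 * ε + 4 * ε ^ 2 := by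
      rw [abs_le]; constructor <;> nlinarith
    have hfac : δ - δ * y = δ * (1 - y) := by ring
    rw [hfac, abs_mul]
    have h2Lm : 2 * L / m = 2 * ε ^ 2 := by rw [hLε]; field_simp
    rw [h2Lm]
    have := mul_le_mul_of_nonneg_left habs (abs_nonneg δ)
    nlinarith [abs_nonneg δ]
  -- assemble
  set G : Set Ω := {ω | q₁ ≤ U ω} ∩ {ω | U ω ≤ q₂} with hG
  have hGmeas : MeasurableSet G :=
    (measurableSet_le measurable_const hU).inter (measurableSet_le hU measurable_const)
  have hGsub : G ⊆ {ω |
        |δ - δ * Real.sqrt (m / U ω)| ≤ 2 * |δ| * (2 * ε + 2 * L / m)} := by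
    rintro ω ⟨h1, h2⟩
    exact det ω h1 h2
  refine le_trans ?_ (measure_mono hGsub)
  apply ENNReal.ofReal_le_of_le_toReal
  have hadd : P G + P Gᶜ = 1 := by rw [measure_add_measure_compl hGmeas, measure_univ]
  have haddR : (P G).toReal + (P Gᶜ).toReal = 1 := by
    rw [← ENNReal.toReal_add (measure_ne_top _ _) (measure_ne_top _ _), hadd, ENNReal.toReal_one]
  have hcsub : P Gᶜ ≤ P {ω | U ω ≤ q₁} + P {ω | q₂ ≤ U ω} := by
    refine le_trans (measure_mono ?_) (measure_union_le _ _)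
    intro ω hω
    rw [hG] at hω
    simp only [Set.mem_compl_iff, Set.mem_inter_iff, Set.mem_setOf_eq, not_and_or] at hω
    rcases hω with h | h
    · exact Or.inl (le_of_not_ge h)
    · exact Or.inr (le_of_not_ge h)
  have hcR : (P Gᶜ).toReal ≤ η := by
    calc (P Gᶜ).toReal ≤ (P {ω | U ω ≤ q₁} + P {ω | q₂ ≤ U ω}).toReal :=
          ENNReal.toReal_mono (by finiteness) hcsub
      _ = (P {ω | U ω ≤ q₁}).toReal + (P {ω | q₂ ≤ U ω}).toReal :=
          ENNReal.toReal_add (measure_ne_top _ _) (measure_ne_top _ _)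
      _ ≤ η := by linarith
  linarith
end
end
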